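/- arXiv:2212.12385 — 9 statements merged into one kernel-verified Lean document; each statement's English description precedes it below -/
import Mathlib

section
/- Let G be a graph and S a nonempty subset of vertices with a fixed vertex v ∈ S. Define a consistent cut of S to be a partition (L, R) of S with v ∈ L such that no edge of G has one endpoint in L and the other in R. Then the number of consistent cuts of S equals 2^(c-1), where c is the number of connected components of the induced subgraph G[S]. In particular, this number is odd if and only if G[S] is connected. -/
open scoped Classical

lemma cut_mem_iff {V : Type} {G : SimpleGraph V} {S L R : Set V}
    (hLR : L ∪ R = S) (hdisj : Disjoint L R)
    (hcut : ∀ a ∈ L, ∀ b ∈ R, ¬ G.Adj a b) {x y : S}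
    (h : (G.induce S).Adj x y) : (x.1 ∈ L ↔ y.1 ∈ L) := by
  have hx : x.1 ∈ L ∪ R := hLR ▸ x.2
  have hy : y.1 ∈ L ∪ R := hLR ▸ y.2
  have hadj : G.Adj x.1 y.1 := h
  constructor
  · intro hxL
    rcases hy with hyL | hyR
    · exact hyL
    · exact absurd hadj (hcut _ hxL _ hyR)
  · intro hyL
    rcases hx with hxL | hxR
    · exact hxL
    · exact absurd hadj.symm (hcut _ hyL _ hxR)

noncomputable def cutEquiv {V : Type} (G : SimpleGraph V) (S : Set V) (v : V) (hv : v ∈ S) :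
    {p : Set V × Set V // p.1 ∪ p.2 = S ∧ Disjoint p.1 p.2 ∧ v ∈ p.1 ∧
      ∀ a ∈ p.1, ∀ b ∈ p.2, ¬ G.Adj a b} ≃
    {f : (G.induce S).ConnectedComponent → Bool //
      f ((G.induce S).connectedComponentMk ⟨v, hv⟩) = true} where
  toFun p := ⟨SimpleGraph.ConnectedComponent.lift (fun x => decide (x.1 ∈ p.1.1))
    (by
      intro x y w _
      induction w with
      | nil => rfl
      | @cons a b c h q ih =>
          rename_i hw
          exact (decide_eq_decide.mpr (cut_mem_iff p.2.1 p.2.2.1 p.2.2.2.2 h)).trans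
            (ih hw.of_cons)),
    by simpa using p.2.2.2.1⟩
  invFun f := ⟨({x : V | ∃ h : x ∈ S, f.1 ((G.induce S).connectedComponentMk ⟨x, h⟩) = true},
      {x : V | ∃ h : x ∈ S, f.1 ((G.induce S).connectedComponentMk ⟨x, h⟩) = false}),
    by
      refine ⟨?_, ?_, ⟨hv, f.2⟩, ?_⟩
      · ext x
        constructor
        · rintro (⟨h, -⟩ | ⟨h, -⟩) <;> exact h
        · intro hx
          rcases Bool.eq_false_or_eq_true (f.1 ((G.induce S).connectedComponentMk ⟨x, hx⟩)) with h | h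
          · exact Or.inl ⟨hx, h⟩
          · exact Or.inr ⟨hx, h⟩
      · rw [Set.disjoint_left]
        rintro x ⟨h, ht⟩ ⟨h', hf⟩
        exact (by decide : (true : Bool) ≠ false) (ht.symm.trans hf)
      · rintro a ⟨ha, hta⟩ b ⟨hb, hfb⟩ hadj
        have : (G.induce S).Adj ⟨a, ha⟩ ⟨b, hb⟩ := by
          simp [SimpleGraph.comap_adj]
          exact hadj
        have hcomp : (G.induce S).connectedComponentMk ⟨a, ha⟩ =
            (G.induce S).connectedComponentMk ⟨b, hb⟩ :=
          SimpleGraph.ConnectedComponent.sound this.reachable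
        rw [hcomp] at hta
        rw [hta] at hfb
        exact absurd hfb (by simp)⟩
  left_inv p := by
    obtain ⟨⟨L, R⟩, hLR, hdisj, hvL, hcut⟩ := p
    ext x
    · -- first component
      simp only [Set.mem_setOf_eq, SimpleGraph.ConnectedComponent.lift_mk]
      constructor
      · rintro ⟨h, ht⟩
        simpa using ht
      · intro hxL
        have hx : x ∈ S := hLR ▸ Or.inl hxL
        exact ⟨hx, by simpa using hxL⟩
    · simp only [Set.mem_setOf_eq, SimpleGraph.ConnectedComponent.lift_mk]
      constructor
      · rintro ⟨h, hf⟩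
        have hxnL : x ∉ L := by simpa using hf
        have : x ∈ L ∪ R := hLR ▸ h
        rcases this with h' | h'
        · exact absurd h' hxnL
        · exact h'
      · intro hxR
        have hx : x ∈ S := hLR ▸ Or.inr hxR
        refine ⟨hx, by simpa using hdisj.subset_compl_left hxR⟩
  right_inv f := by
    obtain ⟨f, hf⟩ := f
    ext c
    refine SimpleGraph.ConnectedComponent.ind (fun x => ?_) c
    simp only [SimpleGraph.ConnectedComponent.lift_mk, Subtype.coe_eta]
    rcases Bool.eq_false_or_eq_true (f ((G.induce S).connectedComponentMk x)) with h | h <;>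
      simp [h, x.2]

noncomputable def pinEquiv {C : Type} (c₀ : C) :
    {f : C → Bool // f c₀ = true} ≃ ({c : C // c ≠ c₀} → Bool) where
  toFun f c := f.1 c.1
  invFun g := ⟨fun c => if h : c = c₀ then true else g ⟨c, h⟩, by simp⟩
  left_inv f := by
    ext c
    by_cases h : c = c₀
    · subst h; simp [f.2]
    · simp [h]
  right_inv g := by
    funext c
    simp [c.2]

lemma pinned_card {C : Type} [Finite C] (c₀ : C) :
    Nat.card {f : C → Bool // f c₀ = true} = 2 ^ (Nat.card C - 1) := by
  have hb : Nat.card Bool = 2 := by simp [Nat.card_eq_fintype_card]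
  rw [Nat.card_congr (pinEquiv c₀), Nat.card_fun, hb]
  congr 1
  have := Fintype.ofFinite C
  simp only [Nat.card_eq_fintype_card]
  have : Fintype.card {c : C // c ≠ c₀} = Fintype.card C - Fintype.card {c : C // c = c₀} :=
    Fintype.card_subtype_compl _
  rw [this, Fintype.card_subtype_eq]

/-- The number of consistent cuts of a nonempty vertex set `S` (with distinguished vertex
`v ∈ S`) equals `2 ^ (c - 1)` where `c` is the number of connected components of the induced
subgraph `G[S]`; in particular this number is odd iff `G[S]` is connected. -/
theorem stmt_0 {V : Type} [Fintype V] [DecidableEq V] (G : SimpleGraph V)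
    [DecidableRel G.Adj] (S : Set V) (v : V) (hv : v ∈ S) :
    Nat.card {p : Set V × Set V //
        p.1 ∪ p.2 = S ∧ Disjoint p.1 p.2 ∧ v ∈ p.1 ∧
        ∀ a ∈ p.1, ∀ b ∈ p.2, ¬ G.Adj a b} =
      2 ^ (Nat.card (G.induce S).ConnectedComponent - 1) ∧
    (Odd (Nat.card {p : Set V × Set V //
        p.1 ∪ p.2 = S ∧ Disjoint p.1 p.2 ∧ v ∈ p.1 ∧
        ∀ a ∈ p.1, ∀ b ∈ p.2, ¬ G.Adj a b}) ↔ (G.induce S).Connected) := by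
  have hfin : Finite (G.induce S).ConnectedComponent := Quot.finite _
  have hne : Nonempty (G.induce S).ConnectedComponent :=
    ⟨(G.induce S).connectedComponentMk ⟨v, hv⟩⟩
  have key : Nat.card {p : Set V × Set V //
        p.1 ∪ p.2 = S ∧ Disjoint p.1 p.2 ∧ v ∈ p.1 ∧
        ∀ a ∈ p.1, ∀ b ∈ p.2, ¬ G.Adj a b} =
      2 ^ (Nat.card (G.induce S).ConnectedComponent - 1) := by
    rw [Nat.card_congr (cutEquiv G S v hv)]
    exact pinned_card _
  refine ⟨key, ?_⟩
  rw [key]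
  have hpos : 1 ≤ Nat.card (G.induce S).ConnectedComponent := Nat.one_le_iff_ne_zero.mpr
    (Nat.card_ne_zero.mpr ⟨hne, hfin⟩)
  constructor
  · intro hodd
    have hexp : Nat.card (G.induce S).ConnectedComponent - 1 = 0 := by
      by_contra h
      exact (Nat.not_odd_iff_even.mpr ((Nat.even_pow).mpr ⟨even_two, h⟩)) hodd
    have hcard : Nat.card (G.induce S).ConnectedComponent = 1 := by omega
    have hsub : Subsingleton (G.induce S).ConnectedComponent :=
      (Nat.card_eq_one_iff_unique.mp hcard).1
    have hneS : Nonempty ↥S := ⟨⟨v, hv⟩⟩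
    exact ⟨fun x y => SimpleGraph.ConnectedComponent.eq.mp (@Subsingleton.elim _ hsub _ _)⟩
  · intro hconn
    have hsub : Subsingleton (G.induce S).ConnectedComponent :=
      hconn.preconnected.subsingleton_connectedComponent
    have : Nat.card (G.induce S).ConnectedComponent = 1 :=
      Nat.card_eq_one_iff_unique.mpr ⟨hsub, hne⟩
    rw [this]
    simp
end

section
/- For any finite graph G, the pathwidth of G is at most the cutwidth of G. -/
/-- The number of edges of `G` crossing the cut after the first `i` positions of the linear
arrangement `ℓ`. -/
noncomputable def cutNum {V : Type} (G : SimpleGraph V) {n : ℕ} (ℓ : Fin n ≃ V) (i : ℕ) : ℕ :=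
  Set.ncard {e : Sym2 V | e ∈ G.edgeSet ∧
    ∃ u w, e = s(u, w) ∧ ((ℓ.symm u : ℕ) < i ∧ i ≤ (ℓ.symm w : ℕ))}

/-- The cutwidth of a finite graph: minimum over linear arrangements of the maximum cut size. -/
noncomputable def cutwidth (V : Type) [Fintype V] (G : SimpleGraph V) : ℕ :=
  sInf {k | ∃ ℓ : Fin (Fintype.card V) ≃ V, ∀ i : ℕ, cutNum G ℓ i ≤ k}

/-- The pathwidth of a finite graph, via path decompositions with bags `B 0, ..., B (r-1)`. -/
noncomputable def pathwidth (V : Type) [Fintype V] (G : SimpleGraph V) : ℕ :=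
  sInf {w | ∃ (r : ℕ) (B : Fin r → Finset V),
    (∀ v, ∃ i, v ∈ B i) ∧
    (∀ u w', G.Adj u w' → ∃ i, u ∈ B i ∧ w' ∈ B i) ∧
    (∀ i j k : Fin r, i ≤ j → j ≤ k → ∀ v, v ∈ B i → v ∈ B k → v ∈ B j) ∧
    (∀ i, (B i).card ≤ w + 1)}

/-- Pathwidth is at most cutwidth. -/
theorem stmt_2 (V : Type) [Fintype V] (G : SimpleGraph V) :
    pathwidth V G ≤ cutwidth V G := by
  classical
  have hne : {k | ∃ ℓ : Fin (Fintype.card V) ≃ V, ∀ i : ℕ, cutNum G ℓ i ≤ k}.Nonempty := by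
    refine ⟨Fintype.card (Sym2 V), (Fintype.equivFin V).symm, fun i => ?_⟩
    calc cutNum G _ i ≤ (Set.univ : Set (Sym2 V)).ncard :=
          Set.ncard_le_ncard (Set.subset_univ _) Set.finite_univ
      _ = Fintype.card (Sym2 V) := by simp [Set.ncard_univ]
  obtain ⟨ℓ, hℓ⟩ := Nat.sInf_mem hne
  apply Nat.sInf_le
  set B : Fin (Fintype.card V) → Finset V := fun i =>
    insert (ℓ i) (Finset.univ.filter fun u =>
      ∃ w, G.Adj u w ∧ (ℓ.symm u : ℕ) < (i : ℕ) ∧ (i : ℕ) ≤ (ℓ.symm w : ℕ)) with hB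
  have hposne : ∀ u w, G.Adj u w → (ℓ.symm u : ℕ) ≠ (ℓ.symm w : ℕ) := by
    intro u w huw h
    exact huw.ne (by simpa using ℓ.symm.injective (Fin.val_injective h))
  refine ⟨Fintype.card V, B, fun v => ⟨ℓ.symm v, by simp [hB]⟩, ?_, ?_, ?_⟩
  · intro u w huw
    rcases lt_or_gt_of_ne (hposne u w huw) with h | h
    · refine ⟨ℓ.symm w, ?_, by simp [hB]⟩
      simp only [hB, Finset.mem_insert, Finset.mem_filter, Finset.mem_univ, true_and]
      exact Or.inr ⟨w, huw, h, le_refl _⟩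
    · refine ⟨ℓ.symm u, by simp [hB], ?_⟩
      simp only [hB, Finset.mem_insert, Finset.mem_filter, Finset.mem_univ, true_and]
      exact Or.inr ⟨u, huw.symm, h, le_refl _⟩
  · intro i j k hij hjk v hvi hvk
    simp only [hB, Finset.mem_insert, Finset.mem_filter, Finset.mem_univ, true_and] at hvi hvk ⊢
    rcases hvi with hvi | ⟨w, hadj, h1, h2⟩
    · rcases hvk with hvk | ⟨w, hadj, h1, h2⟩
      · obtain rfl : i = k := ℓ.injective (hvi ▸ hvk)
        obtain rfl := le_antisymm hij hjk
        exact Or.inl hvi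
      · -- v = ℓ i, crossing at k
        rcases eq_or_lt_of_le hij with rfl | hij'
        · exact Or.inl hvi
        · refine Or.inr ⟨w, hadj, ?_, le_trans (Fin.le_def.mp hjk) h2⟩
          have : ℓ.symm v = i := by rw [hvi]; simp
          rw [this]
          exact Fin.lt_def.mp hij'
    · rcases hvk with hvk | ⟨w', hadj', h1', h2'⟩
      · -- crossing at i, v = ℓ k : contradiction
        exfalso
        have : ℓ.symm v = k := by rw [hvk]; simp
        rw [this] at h1
        have : (i : ℕ) ≤ (k : ℕ) := le_trans (Fin.le_def.mp hij) (Fin.le_def.mp hjk)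
        omega
      · exact Or.inr ⟨w', hadj', lt_of_lt_of_le h1 (Fin.le_def.mp hij),
          le_trans (Fin.le_def.mp hjk) h2'⟩
  · intro i
    have h1 : (Finset.univ.filter fun u =>
        ∃ w, G.Adj u w ∧ (ℓ.symm u : ℕ) < (i : ℕ) ∧ (i : ℕ) ≤ (ℓ.symm w : ℕ)).card
        ≤ cutNum G ℓ (i : ℕ) := by
      rw [cutNum, Set.ncard_eq_toFinset_card']
      apply Finset.card_le_card_of_injOn (fun u =>
        if h : ∃ w, G.Adj u w ∧ (ℓ.symm u : ℕ) < (i : ℕ) ∧ (i : ℕ) ≤ (ℓ.symm w : ℕ)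
        then s(u, h.choose) else s(u, u))
      · intro u hu
        simp only [Finset.mem_coe, Finset.mem_filter, Finset.mem_univ, true_and] at hu
        dsimp only
        rw [dif_pos hu]
        obtain ⟨hadj, hlt, hle⟩ := hu.choose_spec
        simp only [Finset.mem_coe, Set.mem_toFinset, Set.mem_setOf_eq]
        exact ⟨hadj, u, hu.choose, rfl, hlt, hle⟩
      · intro u hu u' hu' heq
        simp only [Finset.coe_filter, Set.mem_setOf_eq, Finset.mem_univ, true_and] at hu hu'
        dsimp only at heq
        rw [dif_pos hu, dif_pos hu'] at heq
        obtain ⟨_, hlt, hle⟩ := hu.choose_spec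
        obtain ⟨_, hlt', hle'⟩ := hu'.choose_spec
        rcases Sym2.eq_iff.mp heq with ⟨h, _⟩ | ⟨h, h'⟩
        · exact h
        · subst h; omega
    calc (B i).card ≤ _ + 1 := Finset.card_insert_le _ _
      _ ≤ cutNum G ℓ (i : ℕ) + 1 := by exact Nat.add_le_add_right h1 1
      _ ≤ cutwidth V G + 1 := Nat.add_le_add_right (hℓ _) 1
end

section
/- Let ℓ be a linear arrangement of a graph G of cutwidth ctw. For 2 ≤ i ≤ n, let X_i be the set of vertices among the first i (in the arrangement) that have a neighbor among the later vertices, together with the i-th vertex v_i, and let Y_i be the set of vertices after position i with a neighbor among the first i. Define A_i = {u ∈ X_i \ {v_i} : |N(u) ∩ Y_i| ≥ 2}, B_i = {u ∈ X_i \ {v_i} : |N(u) ∩ Y_i| = 1 and {u, v_i} ∈ E}, and R_i = X_i \ (A_i ∪ B_i ∪ {v_i}). Then |X_i \ R_i| ≤ (ctw − |R_i|)/2 + 1. -/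
/-- `X i`: vertices among the first `i+1` vertices (0-indexed positions `≤ i`) with a neighbor
among the later ones, together with the vertex at position `i`. -/
def Xset {V : Type} (G : SimpleGraph V) {n : ℕ} (ℓ : Fin n ≃ V) (i : Fin n) : Set V :=
  {v | ℓ.symm v ≤ i ∧ ∃ w, G.Adj v w ∧ i < ℓ.symm w} ∪ {ℓ i}

/-- `Y i`: vertices at positions `> i` with a neighbor at a position `≤ i`. -/
def Yset {V : Type} (G : SimpleGraph V) {n : ℕ} (ℓ : Fin n ≃ V) (i : Fin n) : Set V :=
  {v | i < ℓ.symm v ∧ ∃ w, G.Adj v w ∧ ℓ.symm w ≤ i}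

/-- `|X_i \ R_i| ≤ (ctw − |R_i|)/2 + 1` for `R_i = X_i \ (A_i ∪ B_i ∪ {v_i})`. -/
theorem stmt_3 {V : Type} [Fintype V] [DecidableEq V] (G : SimpleGraph V)
    {n : ℕ} (ℓ : Fin n ≃ V) (ctw : ℕ) (hctw : ∀ t : ℕ, cutNum G ℓ t ≤ ctw)
    (i : Fin n) (hi : 1 ≤ (i : ℕ)) :
    let X := Xset G ℓ i
    let Y := Yset G ℓ i
    let A := {u | u ∈ X ∧ u ≠ ℓ i ∧ 2 ≤ ({w | G.Adj u w} ∩ Y).ncard}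
    let B := {u | u ∈ X ∧ u ≠ ℓ i ∧ ({w | G.Adj u w} ∩ Y).ncard = 1 ∧ G.Adj u (ℓ i)}
    let R := X \ (A ∪ B ∪ {ℓ i})
    ((X \ R).ncard : ℚ) ≤ ((ctw : ℚ) - (R.ncard : ℚ)) / 2 + 1 := by
  classical
  intro X Y A B R
  set v := ℓ i with hv
  have hAX : A ⊆ X := fun u hu => hu.1
  have hBX : B ⊆ X := fun u hu => hu.1
  have hABdisj : Disjoint A B := by
    rw [Set.disjoint_left]
    rintro u ⟨-, -, h2⟩ ⟨-, -, h1, -⟩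
    omega
  have hvA : v ∉ A := fun h => h.2.1 rfl
  have hvB : v ∉ B := fun h => h.2.1 rfl
  have hvX : v ∈ X := Or.inr rfl
  -- X \ R = A ∪ B ∪ {v}
  have hXR : X \ R = A ∪ B ∪ {v} := by
    ext x
    simp only [R, Set.mem_diff, Set.mem_union, Set.mem_singleton_iff]
    constructor
    · rintro ⟨hx, hx2⟩
      by_contra h
      push_neg at h
      exact hx2 ⟨hx, by tauto⟩
    · rintro (⟨hA | hB⟩ | hveq)
      · exact ⟨hAX hA, fun hr => hr.2 (Or.inl (Or.inl hA))⟩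
      · exact ⟨hBX hB, fun hr => hr.2 (Or.inl (Or.inr hB))⟩
      · exact ⟨hveq ▸ hvX, fun hr => hr.2 (Or.inr hveq)⟩
  have hXRcard : (X \ R).ncard = A.ncard + B.ncard + 1 := by
    rw [hXR, Set.ncard_union_eq (by
        simp only [Set.disjoint_singleton_right, Set.mem_union]
        tauto) (Set.toFinite _) (Set.toFinite _),
      Set.ncard_union_eq hABdisj (Set.toFinite _) (Set.toFinite _), Set.ncard_singleton]
  -- Key counting: 2|A| + 2|B| + |R| ≤ ctw
  -- Finsets
  set AF := A.toFinset with hAF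
  set BF := B.toFinset with hBF
  set RF := R.toFinset with hRF
  set NB : V → Finset V := fun u =>
    Finset.univ.filter (fun w => G.Adj u w ∧ (i : ℕ) ≤ (ℓ.symm w : ℕ)) with hNB
  -- elements of X other than v have position < i
  have hposlt : ∀ u ∈ X, u ≠ v → (ℓ.symm u : ℕ) < i := by
    rintro u (hu | hu) hne
    · rcases hu with ⟨h1, -⟩
      have h2 : ℓ.symm u ≠ i := fun h => hne (by rw [hv, ← h, Equiv.apply_symm_apply])
      have h3 : ℓ.symm u < i := lt_of_le_of_ne h1 h2
      exact h3
    · exact absurd hu hne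
  -- the pair set
  set P : Finset (V × V) := Finset.univ.filter (fun p : V × V =>
    G.Adj p.1 p.2 ∧ (ℓ.symm p.1 : ℕ) < i ∧ (i : ℕ) ≤ (ℓ.symm p.2 : ℕ)) with hP
  have hPctw : P.card ≤ ctw := by
    have hinj : Set.InjOn (fun p : V × V => s(p.1, p.2)) P := by
      intro p hp q hq hpq
      simp only [hP, Finset.coe_filter, Set.mem_setOf_eq] at hp hq
      rcases Sym2.eq_iff.mp hpq with ⟨h1, h2⟩ | ⟨h1, h2⟩
      · exact Prod.ext h1 h2
      · exfalso
        have := hp.2.2.1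
        rw [h1] at this
        omega
    have hsub : ↑(P.image (fun p : V × V => s(p.1, p.2))) ⊆
        {e : Sym2 V | e ∈ G.edgeSet ∧
          ∃ u w, e = s(u, w) ∧ ((ℓ.symm u : ℕ) < (i : ℕ) ∧ (i : ℕ) ≤ (ℓ.symm w : ℕ))} := by
      intro e he
      simp only [Finset.coe_image, Set.mem_image, Finset.mem_coe, hP,
        Finset.mem_filter] at he
      obtain ⟨p, ⟨-, hadj, h1, h2⟩, rfl⟩ := he
      exact ⟨G.mem_edgeSet.mpr hadj, p.1, p.2, rfl, h1, h2⟩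
    calc P.card = (P.image (fun p : V × V => s(p.1, p.2))).card :=
          (Finset.card_image_of_injOn hinj).symm
      _ = (↑(P.image (fun p : V × V => s(p.1, p.2))) : Set (Sym2 V)).ncard :=
          (Set.ncard_coe_finset _).symm
      _ ≤ cutNum G ℓ i := Set.ncard_le_ncard hsub (Set.toFinite _)
      _ ≤ ctw := hctw i
  -- each u in A∪B∪R gives (NB u).card edges in P, disjointly
  set T : Finset V := AF ∪ BF ∪ RF with hT
  have hTX : ∀ u ∈ T, u ∈ X ∧ u ≠ v := by
    intro u hu
    simp only [hT, Finset.mem_union, hAF, hBF, hRF, Set.mem_toFinset] at hu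
    rcases hu with (hA | hB) | hR
    · exact ⟨hAX hA, hA.2.1⟩
    · exact ⟨hBX hB, hB.2.1⟩
    · exact ⟨hR.1, fun h => hR.2 (Or.inr h)⟩
  set Q : Finset (V × V) := T.biUnion (fun u => {u} ×ˢ NB u) with hQ
  have hQP : Q ⊆ P := by
    intro p hp
    simp only [hQ, Finset.mem_biUnion, Finset.mem_product, Finset.mem_singleton,
      hNB, Finset.mem_filter] at hp
    obtain ⟨u, hu, hp1, -, hadj, hle⟩ := hp
    obtain ⟨huX, hune⟩ := hTX u hu
    simp only [hP, Finset.mem_filter, Finset.mem_univ, true_and]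
    exact ⟨hp1 ▸ hadj, hp1 ▸ hposlt u huX hune, hle⟩
  have hQcard : Q.card = ∑ u ∈ T, (NB u).card := by
    rw [hQ, Finset.card_biUnion]
    · simp [Finset.card_product]
    · intro a ha b hb hab
      simp only [Finset.disjoint_left, Finset.mem_product, Finset.mem_singleton]
      rintro p ⟨rfl, -⟩ ⟨h, -⟩
      exact hab h
  -- lower bounds on (NB u).card
  have hYpos : ∀ w ∈ Y, (i : ℕ) < (ℓ.symm w : ℕ) := fun w hw => hw.1
  have hNA : ∀ u ∈ AF, 2 ≤ (NB u).card := by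
    intro u hu
    rw [hAF, Set.mem_toFinset] at hu
    obtain ⟨-, -, hcard⟩ := hu
    have h2 : 1 < ({w | G.Adj u w} ∩ Y).ncard := by omega
    obtain ⟨a, b, ha, hb, hab⟩ :=
      (Set.one_lt_ncard_iff (Set.toFinite _)).mp h2
    refine Finset.one_lt_card.mpr ?_
    refine ⟨a, ?_, b, ?_, hab⟩ <;>
      simp only [hNB, Finset.mem_filter, Finset.mem_univ, true_and]
    · exact ⟨ha.1, le_of_lt (hYpos a ha.2)⟩
    · exact ⟨hb.1, le_of_lt (hYpos b hb.2)⟩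
  have hNBf : ∀ u ∈ BF, 2 ≤ (NB u).card := by
    intro u hu
    rw [hBF, Set.mem_toFinset] at hu
    obtain ⟨-, -, hcard, hadj⟩ := hu
    have h0 : ({w | G.Adj u w} ∩ Y).ncard ≠ 0 := by omega
    obtain ⟨y, hy⟩ := Set.nonempty_of_ncard_ne_zero h0
    have hyv : y ≠ v := by
      intro h
      have := hYpos y hy.2
      rw [h, hv, Equiv.symm_apply_apply] at this
      omega
    refine Finset.one_lt_card.mpr ?_
    refine ⟨y, ?_, v, ?_, hyv⟩ <;>
      simp only [hNB, Finset.mem_filter, Finset.mem_univ, true_and]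
    · exact ⟨hy.1, le_of_lt (hYpos y hy.2)⟩
    · exact ⟨hadj, by rw [hv, Equiv.symm_apply_apply]⟩
  have hNR : ∀ u ∈ RF, 1 ≤ (NB u).card := by
    intro u hu
    rw [hRF, Set.mem_toFinset] at hu
    have hune : u ≠ v := fun h => hu.2 (Or.inr h)
    rcases hu.1 with huX | huv
    · obtain ⟨-, w, hadj, hw⟩ := huX
      refine Finset.card_pos.mpr ⟨w, ?_⟩
      simp only [hNB, Finset.mem_filter, Finset.mem_univ, true_and]
      exact ⟨hadj, le_of_lt hw⟩
    · exact absurd huv hune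
  -- disjointness of the finsets
  have hdAB : Disjoint AF BF := by
    rw [hAF, hBF, Set.disjoint_toFinset]
    exact hABdisj
  have hdABR : Disjoint (AF ∪ BF) RF := by
    rw [Finset.disjoint_left]
    intro u hu hur
    rw [hRF, Set.mem_toFinset] at hur
    rw [Finset.mem_union, hAF, hBF, Set.mem_toFinset, Set.mem_toFinset] at hu
    exact hur.2 (Or.inl hu)
  have hsum : 2 * AF.card + 2 * BF.card + RF.card ≤ ∑ u ∈ T, (NB u).card := by
    rw [hT, Finset.sum_union hdABR, Finset.sum_union hdAB]
    have h1 : AF.card * 2 ≤ ∑ u ∈ AF, (NB u).card := by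
      simpa using Finset.card_nsmul_le_sum AF _ 2 hNA
    have h2 : BF.card * 2 ≤ ∑ u ∈ BF, (NB u).card := by
      simpa using Finset.card_nsmul_le_sum BF _ 2 hNBf
    have h3 : RF.card * 1 ≤ ∑ u ∈ RF, (NB u).card := by
      simpa using Finset.card_nsmul_le_sum RF _ 1 hNR
    omega
  have hkey : 2 * A.ncard + 2 * B.ncard + R.ncard ≤ ctw := by
    have hA' : A.ncard = AF.card := by rw [hAF]; exact Set.ncard_eq_toFinset_card' A
    have hB' : B.ncard = BF.card := by rw [hBF]; exact Set.ncard_eq_toFinset_card' B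
    have hR' : R.ncard = RF.card := by rw [hRF]; exact Set.ncard_eq_toFinset_card' R
    rw [hA', hB', hR']
    calc 2 * AF.card + 2 * BF.card + RF.card ≤ ∑ u ∈ T, (NB u).card := hsum
      _ = Q.card := hQcard.symm
      _ ≤ P.card := Finset.card_le_card hQP
      _ ≤ ctw := hPctw
  rw [hXRcard]
  have h2 : (2 * A.ncard + 2 * B.ncard + R.ncard : ℚ) ≤ (ctw : ℚ) := by
    exact_mod_cast hkey
  push_cast
  linarith
end

section
/- Every vertex in A_i ∪ B_i has at least two incident edges crossing the (i−1)-th cut, and every vertex of R_i has at least one incident edge crossing the (i−1)-th cut, hence |R_i| + 2(|A_i| + |B_i|) ≤ ctw. -/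
/-- Every vertex of `A_i ∪ B_i` has at least two incident edges crossing the `(i-1)`-th cut,
every vertex of `R_i` has at least one, hence `|R_i| + 2(|A_i| + |B_i|) ≤ ctw`.  (The
`(i-1)`-th cut of the paper, 1-indexed, is the cut after the first `i` positions 0-indexed;
for a vertex `u` on the left side, its incident crossing edges correspond to its neighbors at
positions `≥ i`.) -/
theorem stmt_4 {V : Type} [Fintype V] [DecidableEq V] (G : SimpleGraph V)
    {n : ℕ} (ℓ : Fin n ≃ V) (ctw : ℕ) (hctw : ∀ t : ℕ, cutNum G ℓ t ≤ ctw)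
    (i : Fin n) (hi : 1 ≤ (i : ℕ)) :
    let X := Xset G ℓ i
    let Y := Yset G ℓ i
    let A := {u | u ∈ X ∧ u ≠ ℓ i ∧ 2 ≤ ({w | G.Adj u w} ∩ Y).ncard}
    let B := {u | u ∈ X ∧ u ≠ ℓ i ∧ ({w | G.Adj u w} ∩ Y).ncard = 1 ∧ G.Adj u (ℓ i)}
    let R := X \ (A ∪ B ∪ {ℓ i})
    (∀ u ∈ A ∪ B, 2 ≤ ({w | G.Adj u w ∧ (i : ℕ) ≤ (ℓ.symm w : ℕ)}).ncard) ∧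
    (∀ u ∈ R, 1 ≤ ({w | G.Adj u w ∧ (i : ℕ) ≤ (ℓ.symm w : ℕ)}).ncard) ∧
    R.ncard + 2 * (A.ncard + B.ncard) ≤ ctw := by
  classical
  intro X Y A B R
  set T : V → Set V := fun u => {w | G.Adj u w ∧ (i : ℕ) ≤ (ℓ.symm w : ℕ)} with hTdef
  -- position facts
  have hXlt : ∀ u ∈ X, u ≠ ℓ i → (ℓ.symm u : ℕ) < (i : ℕ) := by
    intro u hu hne
    rcases hu with h | h
    · rcases h with ⟨hle, _⟩
      refine lt_of_le_of_ne hle ?_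
      intro h
      exact hne (by rw [← ℓ.apply_symm_apply u, Fin.ext h])
    · exact absurd h hne
  -- A and B have ≥ 2
  have hAB2 : ∀ u ∈ A ∪ B, 2 ≤ (T u).ncard := by
    intro u hu
    rcases hu with hA | hB
    · obtain ⟨_, _, h2⟩ := hA
      refine le_trans h2 (Set.ncard_le_ncard ?_ (Set.toFinite _))
      rintro w ⟨hadj, hw⟩
      exact ⟨hadj, le_of_lt hw.1⟩
    · obtain ⟨hX, hne, h1, hadj⟩ := hB
      obtain ⟨w, hw⟩ := Set.ncard_eq_one.mp h1
      have hwmem : w ∈ ({w | G.Adj u w} ∩ Y) := hw ▸ rfl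
      obtain ⟨hadjw, hwY⟩ := hwmem
      have h2 : (1 : ℕ) < (T u).ncard := by
        rw [Set.one_lt_ncard_iff (Set.toFinite _)]
        refine ⟨w, ℓ i, ⟨hadjw, le_of_lt hwY.1⟩, ⟨hadj, by simp⟩, ?_⟩
        intro h
        have := hwY.1
        rw [h] at this
        simp at this
      omega
  -- R has ≥ 1
  have hR1 : ∀ u ∈ R, 1 ≤ (T u).ncard := by
    intro u hu
    obtain ⟨huX, hnot⟩ := hu
    have hne : u ≠ ℓ i := fun h => hnot (Or.inr h)
    rcases huX with h | h
    · obtain ⟨_, w, hadj, hw⟩ := h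
      have : (T u).Nonempty := ⟨w, hadj, le_of_lt hw⟩
      exact (Set.ncard_pos (Set.toFinite _)).mpr this
    · exact absurd h hne
  refine ⟨hAB2, hR1, ?_⟩
  -- S membership facts
  have hSX : ∀ u, u ∈ A ∪ B ∪ R → u ∈ X ∧ u ≠ ℓ i := by
    intro u hu
    rcases hu with (hA | hB) | hR'
    · exact ⟨hA.1, hA.2.1⟩
    · exact ⟨hB.1, hB.2.1⟩
    · exact ⟨hR'.1, fun h => hR'.2 (Or.inr h)⟩
  -- Finsets
  set F : V → Finset V := fun u => (T u).toFinset with hFdef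
  have hFcard : ∀ u, (F u).card = (T u).ncard := fun u =>
    (Set.ncard_eq_toFinset_card' (T u)).symm
  set Af := A.toFinset with hAf
  set Bf := B.toFinset with hBf
  set Rf := R.toFinset with hRf
  set Sf : Finset V := Af ∪ Bf ∪ Rf with hSf
  have hSfmem : ∀ u ∈ Sf, u ∈ A ∪ B ∪ R := by
    intro u hu
    rcases Finset.mem_union.mp hu with h | h
    · rcases Finset.mem_union.mp h with h | h
      · exact Or.inl (Or.inl (Set.mem_toFinset.mp h))
      · exact Or.inl (Or.inr (Set.mem_toFinset.mp h))
    · exact Or.inr (Set.mem_toFinset.mp h)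
  -- pairs
  set Pf : Finset (V × V) := Sf.biUnion (fun u => (F u).image (fun w => (u, w))) with hPf
  have hPcard : Pf.card = ∑ u ∈ Sf, (F u).card := by
    rw [hPf, Finset.card_biUnion]
    · refine Finset.sum_congr rfl fun u _ => ?_
      exact Finset.card_image_of_injective _ (fun a b h => (Prod.mk.injEq _ _ _ _).mp h |>.2)
    · intro x _ y _ hxy
      simp only [Finset.disjoint_left, Finset.mem_image]
      rintro p ⟨a, _, rfl⟩ ⟨b, _, hb⟩
      exact hxy (congrArg Prod.fst hb).symm
  -- sum lower bound
  have hdisjAB : Disjoint Af Bf := by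
    rw [Finset.disjoint_left]
    intro u hA hB
    have h2 := (Set.mem_toFinset.mp hA).2.2
    have h1 := (Set.mem_toFinset.mp hB).2.2.1
    omega
  have hdisjR : Disjoint (Af ∪ Bf) Rf := by
    rw [Finset.disjoint_left]
    intro u hu hR'
    have hR'' := (Set.mem_toFinset.mp hR').2
    rcases Finset.mem_union.mp hu with h | h
    · exact hR'' (Or.inl (Or.inl (Set.mem_toFinset.mp h)))
    · exact hR'' (Or.inl (Or.inr (Set.mem_toFinset.mp h)))
  have hsum : Rf.card + 2 * (Af.card + Bf.card) ≤ ∑ u ∈ Sf, (F u).card := by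
    rw [hSf, Finset.sum_union hdisjR, Finset.sum_union hdisjAB]
    have hA2 : 2 * Af.card ≤ ∑ u ∈ Af, (F u).card := by
      calc 2 * Af.card = ∑ _u ∈ Af, 2 := by rw [Finset.sum_const]; ring
        _ ≤ _ := Finset.sum_le_sum fun u hu => by
              rw [hFcard]; exact hAB2 u (Or.inl (Set.mem_toFinset.mp hu))
    have hB2 : 2 * Bf.card ≤ ∑ u ∈ Bf, (F u).card := by
      calc 2 * Bf.card = ∑ _u ∈ Bf, 2 := by rw [Finset.sum_const]; ring
        _ ≤ _ := Finset.sum_le_sum fun u hu => by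
              rw [hFcard]; exact hAB2 u (Or.inr (Set.mem_toFinset.mp hu))
    have hR2 : Rf.card ≤ ∑ u ∈ Rf, (F u).card := by
      calc Rf.card = ∑ _u ∈ Rf, 1 := by simp
        _ ≤ _ := Finset.sum_le_sum fun u hu => by
              rw [hFcard]; exact hR1 u (Set.mem_toFinset.mp hu)
    omega
  -- injection into cut edges
  set g : V × V → Sym2 V := fun p => s(p.1, p.2) with hg
  have hPfacts : ∀ p ∈ Pf, (ℓ.symm p.1 : ℕ) < (i : ℕ) ∧ G.Adj p.1 p.2 ∧ (i : ℕ) ≤ (ℓ.symm p.2 : ℕ) := by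
    intro p hp
    rw [hPf, Finset.mem_biUnion] at hp
    obtain ⟨u, hu, hp⟩ := hp
    obtain ⟨w, hw, rfl⟩ := Finset.mem_image.mp hp
    have hw' := Set.mem_toFinset.mp hw
    have hux := hSX u (hSfmem u hu)
    exact ⟨hXlt u hux.1 hux.2, hw'.1, hw'.2⟩
  have hinj : Set.InjOn g ↑Pf := by
    intro p hp q hq heq
    have hp' := hPfacts p (Finset.mem_coe.mp hp)
    have hq' := hPfacts q (Finset.mem_coe.mp hq)
    rcases Sym2.eq_iff.mp heq with ⟨h1, h2⟩ | ⟨h1, h2⟩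
    · exact Prod.ext h1 h2
    · exfalso
      rw [← h1] at hq'
      omega
  have hsub : Pf.image g ⊆ {e : Sym2 V | e ∈ G.edgeSet ∧
      ∃ u w, e = s(u, w) ∧ ((ℓ.symm u : ℕ) < (i : ℕ) ∧ (i : ℕ) ≤ (ℓ.symm w : ℕ))}.toFinset := by
    intro e he
    obtain ⟨p, hp, rfl⟩ := Finset.mem_image.mp he
    have hp' := hPfacts p hp
    rw [Set.mem_toFinset]
    exact ⟨(SimpleGraph.mem_edgeSet G).mpr hp'.2.1, p.1, p.2, rfl, hp'.1, hp'.2.2⟩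
  have hcut : Pf.card ≤ cutNum G ℓ (i : ℕ) := by
    have h1 : Pf.card = (Pf.image g).card := (Finset.card_image_of_injOn hinj).symm
    rw [h1, cutNum, Set.ncard_eq_toFinset_card']
    exact Finset.card_le_card hsub
  -- finish
  have hcards : R.ncard = Rf.card ∧ A.ncard = Af.card ∧ B.ncard = Bf.card :=
    ⟨Set.ncard_eq_toFinset_card' R, Set.ncard_eq_toFinset_card' A, Set.ncard_eq_toFinset_card' B⟩
  have := hctw (i : ℕ)
  omega
end

section
/- Let Ĝ be the 2-subdivision of a graph G (every edge subdivided twice). Then Ĝ admits a minimum feedback vertex set that contains no subdivision vertex, and the feedback vertex set numbers of G and Ĝ are equal. -/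
/-- The 2-subdivision of `G`, with subdivision vertices indexed by the darts of `G`. -/
def subdiv2 {V : Type} (G : SimpleGraph V) : SimpleGraph (V ⊕ G.Dart) :=
  SimpleGraph.fromRel (fun x y =>
    match x, y with
    | Sum.inl u, Sum.inr d => d.toProd.1 = u
    | Sum.inr d, Sum.inr d' => d' = d.symm
    | _, _ => False)

/-- The feedback vertex set number: minimum size of a vertex set whose removal leaves an
acyclic graph. -/
noncomputable def fvsNum {W : Type} [Fintype W] (H : SimpleGraph W) : ℕ :=
  sInf {k | ∃ Y : Finset W, Y.card = k ∧ (H.induce ((↑Y : Set W)ᶜ)).IsAcyclic}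

open SimpleGraph Walk

variable {V : Type} {G : SimpleGraph V}

lemma adj_inl_inr {u : V} {d : G.Dart} :
    (subdiv2 G).Adj (Sum.inl u) (Sum.inr d) ↔ d.fst = u := by
  simp [subdiv2, SimpleGraph.fromRel_adj]

lemma adj_inr_inl {u : V} {d : G.Dart} :
    (subdiv2 G).Adj (Sum.inr d) (Sum.inl u) ↔ d.fst = u := by
  simp [subdiv2, SimpleGraph.fromRel_adj]

lemma not_adj_inl_inl {u v : V} : ¬ (subdiv2 G).Adj (Sum.inl u) (Sum.inl v) := by
  simp [subdiv2, SimpleGraph.fromRel_adj]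

lemma adj_inr_inr {d d' : G.Dart} :
    (subdiv2 G).Adj (Sum.inr d) (Sum.inr d') ↔ d' = d.symm := by
  simp only [subdiv2, SimpleGraph.fromRel_adj]
  constructor
  · rintro ⟨-, h | h⟩
    · exact h
    · rw [h]; simp
  · rintro rfl
    exact ⟨fun h => d.symm_ne (Sum.inr.inj h).symm, Or.inl rfl⟩

lemma adj_inl_cases {u : V} {x : V ⊕ G.Dart} (h : (subdiv2 G).Adj (Sum.inl u) x) :
    ∃ d : G.Dart, x = Sum.inr d ∧ d.fst = u := by
  cases x with
  | inl v => exact absurd h not_adj_inl_inl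
  | inr d => exact ⟨d, rfl, adj_inl_inr.1 h⟩

lemma adj_inr_cases {d : G.Dart} {x : V ⊕ G.Dart} (h : (subdiv2 G).Adj (Sum.inr d) x) :
    x = Sum.inl d.fst ∨ x = Sum.inr d.symm := by
  cases x with
  | inl v => exact Or.inl (by rw [adj_inr_inl.1 h])
  | inr d' => exact Or.inr (by rw [adj_inr_inr.1 h])
def liftWalk {u v : V} : G.Walk u v → (subdiv2 G).Walk (Sum.inl u) (Sum.inl v)
  | Walk.nil => Walk.nil
  | Walk.cons (v := w) h q =>
    Walk.cons (adj_inl_inr.2 rfl : (subdiv2 G).Adj (Sum.inl u) (Sum.inr ⟨(u, w), h⟩))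
      (Walk.cons (adj_inr_inr.2 rfl)
        (Walk.cons (adj_inr_inl.2 rfl : (subdiv2 G).Adj (Sum.inr (⟨(u, w), h⟩ : G.Dart).symm) (Sum.inl w))
          (liftWalk q)))

lemma symm_eq_comm {d e : G.Dart} : d.symm = e ↔ d = e.symm := by
  constructor <;> rintro rfl <;> simp

lemma liftWalk_support_inl {u v w : V} (p : G.Walk u v) :
    Sum.inl w ∈ (liftWalk p).support ↔ w ∈ p.support := by
  induction p with
  | nil => simp [liftWalk]
  | cons h q ih =>
    show Sum.inl w ∈ Sum.inl _ :: Sum.inr _ :: Sum.inr _ :: (liftWalk q).support ↔ _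
    simp [ih]

lemma liftWalk_support_inr {u v : V} {d : G.Dart} (p : G.Walk u v) :
    Sum.inr d ∈ (liftWalk p).support ↔ d ∈ p.darts ∨ d.symm ∈ p.darts := by
  induction p with
  | nil => simp [liftWalk]
  | cons h q ih =>
    simp only [liftWalk, Walk.support_cons, List.mem_cons, Walk.darts_cons, ih]
    simp only [symm_eq_comm, Sum.inr.injEq, (by simp : ∀ x : V, (Sum.inr d : V ⊕ G.Dart) = Sum.inl x ↔ False)]
    tauto
lemma liftWalk_edges {u v : V} (p : G.Walk u v) {e : Sym2 (V ⊕ G.Dart)}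
    (he : e ∈ (liftWalk p).edges) :
    ∃ d ∈ p.darts, e = s(Sum.inl d.fst, Sum.inr d) ∨ e = s(Sum.inr d, Sum.inr d.symm) ∨
      e = s(Sum.inr d.symm, Sum.inl d.snd) := by
  induction p with
  | nil => simp [liftWalk] at he
  | cons h q ih =>
    simp only [liftWalk, Walk.edges_cons, List.mem_cons] at he
    rcases he with rfl | rfl | rfl | he
    · exact ⟨_, List.mem_cons_self, Or.inl rfl⟩
    · exact ⟨_, List.mem_cons_self, Or.inr (Or.inl rfl)⟩
    · exact ⟨_, List.mem_cons_self, Or.inr (Or.inr rfl)⟩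
    · obtain ⟨d, hd, hor⟩ := ih he
      exact ⟨d, List.mem_cons_of_mem _ hd, hor⟩

lemma liftWalk_isPath {u v : V} {p : G.Walk u v} (hp : p.IsPath) : (liftWalk p).IsPath := by
  induction p with
  | nil => simp [liftWalk]
  | cons h q ih =>
    rw [Walk.cons_isPath_iff] at hp
    have hq := ih hp.1
    have hd : (⟨(_, _), h⟩ : G.Dart) ∉ q.darts := fun hmem =>
      hp.2 (q.dart_fst_mem_support_of_mem_darts hmem)
    have hds : (⟨(_, _), h⟩ : G.Dart).symm ∉ q.darts := fun hmem => by
      have := q.dart_snd_mem_support_of_mem_darts hmem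
      exact hp.2 (by simpa using this)
    refine Walk.IsPath.cons (Walk.IsPath.cons (Walk.IsPath.cons hq ?_) ?_) ?_
    · rw [liftWalk_support_inr]
      simp only [Dart.symm_symm]
      tauto
    · simp only [Walk.support_cons, List.mem_cons]
      rw [liftWalk_support_inr]
      push_neg
      refine ⟨?_, by tauto⟩
      intro hh
      exact (⟨(_, _), h⟩ : G.Dart).symm_ne (Sum.inr.inj hh).symm
    · simp only [Walk.support_cons, List.mem_cons]
      rw [liftWalk_support_inl]
      push_neg
      exact ⟨by simp, by simp, hp.2⟩

lemma liftWalk_isCycle {u : V} {c : G.Walk u u} (hc : c.IsCycle) : (liftWalk c).IsCycle := by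
  cases c with
  | nil => exact absurd hc Walk.IsCycle.not_of_nil
  | cons h q =>
    rw [Walk.cons_isCycle_iff] at hc
    obtain ⟨hq, he⟩ := hc
    show Walk.IsCycle (Walk.cons _ (Walk.cons _ (Walk.cons _ (liftWalk q))))
    have hd : (⟨(_, _), h⟩ : G.Dart) ∉ q.darts := fun hmem =>
      he (List.mem_map_of_mem (f := Dart.edge) hmem)
    have hds : (⟨(_, _), h⟩ : G.Dart).symm ∉ q.darts := fun hmem => by
      have h2 : (⟨(_, _), h⟩ : G.Dart).symm.edge ∈ q.edges :=
        List.mem_map_of_mem (f := Dart.edge) hmem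
      rw [Dart.edge_symm] at h2
      exact he h2
    rw [Walk.cons_isCycle_iff]
    constructor
    · refine Walk.IsPath.cons (Walk.IsPath.cons (liftWalk_isPath hq) ?_) ?_
      · rw [liftWalk_support_inr]
        simp only [Dart.symm_symm]
        tauto
      · simp only [Walk.support_cons, List.mem_cons]
        rw [liftWalk_support_inr]
        push_neg
        refine ⟨?_, by tauto⟩
        intro hh
        exact (⟨(_, _), h⟩ : G.Dart).symm_ne (Sum.inr.inj hh).symm
    · simp only [Walk.edges_cons, List.mem_cons]
      push_neg
      refine ⟨by simp, ?_, ?_⟩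
      · intro hcontra
        rw [Sym2.eq_iff] at hcontra
        rcases hcontra with ⟨h1, -⟩ | ⟨-, h1⟩
        · exact absurd h1 (by simp)
        · exact Dart.symm_ne _ (Sum.inr.inj h1).symm
      · intro hmem
        obtain ⟨d', hd', hor⟩ := liftWalk_edges _ hmem
        rcases hor with h1 | h1 | h1 <;> rw [Sym2.eq_iff] at h1
        · rcases h1 with ⟨-, h1⟩ | ⟨h1, -⟩
          · exact hd (by rw [Sum.inr.inj h1]; exact hd')
          · exact absurd h1 (by simp)
        · rcases h1 with ⟨h1, -⟩ | ⟨h1, -⟩ <;> exact absurd h1 (by simp)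
        · rcases h1 with ⟨h1, -⟩ | ⟨-, h1⟩
          · exact absurd h1 (by simp)
          · have h2 := Sum.inr.inj h1
            have h3 : d' = (⟨(_, _), h⟩ : G.Dart).symm := by
              rw [h2, Dart.symm_symm]
            exact hds (h3 ▸ hd')
lemma project_path : ∀ (n : ℕ) {a b : V} (P : (subdiv2 G).Walk (Sum.inl a) (Sum.inl b)),
    P.length = n → P.IsPath →
    ∃ q : G.Walk a b, q.IsPath ∧ (∀ w ∈ q.support, Sum.inl w ∈ P.support) ∧
      ∀ d ∈ q.darts, Sum.inr d ∈ P.support ∧ Sum.inr d.symm ∈ P.support := by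
  intro n
  induction n using Nat.strong_induction_on with
  | _ n ih =>
    intro a b P hlen hP
    cases P with
    | nil => exact ⟨Walk.nil, by simp, by simp, by simp⟩
    | cons h₁ P₁ =>
      obtain ⟨d, rfl, hd⟩ := adj_inl_cases h₁
      subst hd
      cases P₁ with
      | cons h₂ P₂ =>
        rw [Walk.cons_isPath_iff] at hP
        obtain ⟨hP1, hP2⟩ := hP
        rcases adj_inr_cases h₂ with rfl | rfl
        · exfalso
          exact hP2 (by simp)
        · cases P₂ with
          | cons h₃ P₃ =>
            rw [Walk.cons_isPath_iff] at hP1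
            obtain ⟨hP11, hP12⟩ := hP1
            rcases adj_inr_cases h₃ with rfl | rfl
            · rw [Walk.cons_isPath_iff] at hP11
              obtain ⟨hP111, hP112⟩ := hP11
              obtain ⟨q₃, hq₃p, hq₃s, hq₃d⟩ := ih P₃.length
                (by rw [← hlen]; simp [Walk.length_cons]; omega) P₃ rfl hP111
              refine ⟨Walk.cons (show G.Adj d.fst d.symm.fst from d.adj) q₃, ?_, ?_, ?_⟩
              · rw [Walk.cons_isPath_iff]
                refine ⟨hq₃p, fun hmem => ?_⟩
                exact hP2 (by simp [hq₃s _ hmem])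
              · intro w hw
                rcases List.mem_cons.1 hw with rfl | hw
                · simp
                · simp [hq₃s _ hw]
              · intro δ hδ
                rcases List.mem_cons.1 hδ with rfl | hδ
                · constructor
                  · have : (⟨(d.fst, d.symm.fst), d.adj⟩ : G.Dart) = d := Dart.ext _ _ rfl
                    rw [this]
                    simp
                  · have : (⟨(d.fst, d.symm.fst), d.adj⟩ : G.Dart) = d := Dart.ext _ _ rfl
                    rw [this]
                    simp
                · obtain ⟨m1, m2⟩ := hq₃d δ hδ
                  simp only [Walk.support_cons, List.mem_cons]
                  tauto
            · exfalso
              refine hP12 ?_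
              rw [Walk.support_cons, Walk.support_eq_cons]
              simp
lemma project_cycle_inl {u : V} (c : (subdiv2 G).Walk (Sum.inl u) (Sum.inl u))
    (hc : c.IsCycle) :
    ∃ q : G.Walk u u, q.IsCycle ∧ ∀ w ∈ q.support, Sum.inl w ∈ c.support := by
  cases c with
  | nil => exact absurd hc Walk.IsCycle.not_of_nil
  | cons h₁ t =>
    obtain ⟨d, rfl, hd⟩ := adj_inl_cases h₁
    subst hd
    have h3 := hc.three_le_length
    rw [Walk.cons_isCycle_iff] at hc
    obtain ⟨ht, hedge⟩ := hc
    cases t with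
    | cons h₂ t₂ =>
      rcases adj_inr_cases h₂ with rfl | rfl
      · exfalso
        rw [Walk.cons_isPath_iff] at ht
        have hnil := Walk.isPath_iff_eq_nil.1 ht.1
        rw [hnil] at h3
        simp at h3
      · cases t₂ with
        | cons h₃ t₃ =>
          rw [Walk.cons_isPath_iff] at ht
          obtain ⟨ht₂, hd_not⟩ := ht
          rw [Walk.cons_isPath_iff] at ht₂
          obtain ⟨ht₃', hds_not⟩ := ht₂
          rcases adj_inr_cases h₃ with rfl | rfl
          · -- good case
            obtain ⟨q₃, hq₃p, hq₃s, hq₃d⟩ := project_path t₃.length t₃ rfl ht₃'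
            refine ⟨Walk.cons (show G.Adj d.fst d.symm.fst from d.adj) q₃, ?_, ?_⟩
            · rw [Walk.cons_isCycle_iff]
              refine ⟨hq₃p, fun hmem => ?_⟩
              obtain ⟨δ, hδ, hδe⟩ := List.mem_map.1 hmem
              have : δ = d ∨ δ = d.symm := by
                rw [← dart_edge_eq_iff]
                exact hδe
              obtain ⟨m1, m2⟩ := hq₃d δ hδ
              rcases this with rfl | rfl
              · exact hd_not (by simp [m1])
              · rw [Dart.symm_symm] at m2
                exact hds_not m1
            · intro w hw
              rcases List.mem_cons.1 hw with rfl | hw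
              · simp
              · simp [hq₃s _ hw]
          · exfalso
            refine hd_not ?_
            rw [Walk.support_cons, Walk.support_eq_cons]
            simp
lemma project_cycle [DecidableEq V] {x : V ⊕ G.Dart} (c : (subdiv2 G).Walk x x) (hc : c.IsCycle) :
    ∃ (u : V) (q : G.Walk u u), q.IsCycle ∧ ∀ w ∈ q.support, Sum.inl w ∈ c.support := by
  have hinl : ∃ u : V, Sum.inl u ∈ c.support := by
    cases x with
    | inl u => exact ⟨u, c.start_mem_support⟩
    | inr d0 =>
      cases c with
      | nil => exact absurd hc Walk.IsCycle.not_of_nil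
      | cons h₁ r =>
        have h3 := hc.three_le_length
        rw [Walk.cons_isCycle_iff] at hc
        rcases adj_inr_cases h₁ with rfl | rfl
        · exact ⟨d0.fst, by simp⟩
        · obtain ⟨x₂, h₂, r₂, rfl⟩ := Walk.exists_eq_cons_of_ne
            (fun hcon => d0.symm_ne (Sum.inr.inj hcon)) r
          rcases adj_inr_cases h₂ with rfl | rfl
          · exact ⟨d0.symm.fst, List.mem_cons_of_mem _ (List.mem_cons_of_mem _ r₂.start_mem_support)⟩
          · exfalso
            rw [Walk.cons_isPath_iff] at hc
            have hcopy : (r₂.copy (by rw [Dart.symm_symm]) rfl).IsPath := by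
              rw [Walk.isPath_copy]; exact hc.1.1
            have hnil := Walk.isPath_iff_eq_nil.1 hcopy
            have hlen : r₂.length = 0 := by
              have := congrArg Walk.length hnil
              simpa using this
            simp [Walk.length_cons, hlen] at h3
  obtain ⟨u, hu⟩ := hinl
  have hc' := hc.rotate hu
  have hmem : ∀ y, y ∈ (c.rotate _ hu).support → y ∈ c.support := by
    intro y hy
    rw [Walk.support_eq_cons] at hy
    rcases List.mem_cons.1 hy with rfl | hy
    · exact hu
    · have hrot := Walk.support_rotate c _ hu
      have h2 := hrot.perm.mem_iff.1 hy
      rw [Walk.support_eq_cons c]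
      exact List.mem_cons_of_mem _ h2
  obtain ⟨q, hq, hqs⟩ := project_cycle_inl (c.rotate _ hu) hc'
  exact ⟨u, q, hq, fun w hw => hmem _ (hqs w hw)⟩

lemma exists_lift_induce {W : Type} {H : SimpleGraph W} {s : Set W} :
    ∀ {u v : W} (p : H.Walk u v) (hu : u ∈ s) (hv : v ∈ s),
    (∀ x ∈ p.support, x ∈ s) →
    ∃ q : (H.induce s).Walk ⟨u, hu⟩ ⟨v, hv⟩,
      q.map (SimpleGraph.Embedding.induce s).toHom = p := by
  intro u v p
  induction p with
  | nil => exact fun hu hv _ => ⟨Walk.nil, rfl⟩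
  | cons h p ih =>
    intro hu hv hs
    have hw := hs _ (List.mem_cons_of_mem _ p.start_mem_support)
    obtain ⟨q, hq⟩ := ih hw hv (fun x hx => hs x (by simp [hx]))
    exact ⟨Walk.cons (by simpa using h) q, by simp [hq]⟩

lemma induce_acyclic_iff {W : Type} (H : SimpleGraph W) (s : Set W) :
    (H.induce s).IsAcyclic ↔
      ∀ (v : W) (c : H.Walk v v), c.IsCycle → ∃ x ∈ c.support, x ∉ s := by
  constructor
  · intro hA v c hc
    by_contra hcon
    push_neg at hcon
    have hv : v ∈ s := hcon v c.start_mem_support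
    obtain ⟨q, hq⟩ := exists_lift_induce c hv hv hcon
    have hinj : Function.Injective (SimpleGraph.Embedding.induce (G := H) s).toHom :=
      Subtype.val_injective
    have : q.IsCycle := by
      rw [← Walk.map_isCycle_iff_of_injective hinj, hq]
      exact hc
    exact hA q this
  · intro hyp v q hq
    have hc : (q.map (SimpleGraph.Embedding.induce s).toHom).IsCycle :=
      hq.map Subtype.val_injective
    obtain ⟨x, hx, hxs⟩ := hyp _ _ hc
    rw [Walk.support_map] at hx
    obtain ⟨y, _, rfl⟩ := List.mem_map.1 hx
    exact hxs y.2
lemma image_inl_acyclic [DecidableEq V] (S : Finset V)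
    (hS : (G.induce ((↑S : Set V)ᶜ)).IsAcyclic) :
    ((subdiv2 G).induce ((↑(S.image (Sum.inl : V → V ⊕ G.Dart)) : Set (V ⊕ G.Dart))ᶜ)).IsAcyclic := by
  rw [induce_acyclic_iff] at hS ⊢
  intro x c hc
  obtain ⟨u, q, hq, hqs⟩ := project_cycle c hc
  obtain ⟨w, hw, hwS⟩ := hS u q hq
  simp only [Set.mem_compl_iff, not_not, Finset.mem_coe] at hwS
  refine ⟨Sum.inl w, hqs w hw, ?_⟩
  simp only [Set.mem_compl_iff, not_not, Finset.coe_image, Set.mem_image, Finset.mem_coe]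
  exact ⟨w, hwS, rfl⟩

lemma image_proj_acyclic [DecidableEq V] (Y : Finset (V ⊕ G.Dart))
    (hY : ((subdiv2 G).induce ((↑Y : Set (V ⊕ G.Dart))ᶜ)).IsAcyclic) :
    (G.induce ((↑(Y.image (Sum.elim id (fun d : G.Dart => d.fst))) : Set V)ᶜ)).IsAcyclic := by
  rw [induce_acyclic_iff] at hY ⊢
  intro v q hq
  obtain ⟨x, hx, hxY⟩ := hY _ (liftWalk q) (liftWalk_isCycle hq)
  simp only [Set.mem_compl_iff, not_not, Finset.mem_coe] at hxY
  cases x with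
  | inl w =>
    have hw : w ∈ q.support := (liftWalk_support_inl q).1 hx
    refine ⟨w, hw, ?_⟩
    simp only [Set.mem_compl_iff, not_not, Finset.coe_image, Set.mem_image, Finset.mem_coe]
    exact ⟨Sum.inl w, hxY, rfl⟩
  | inr d =>
    have hd := (liftWalk_support_inr q).1 hx
    have hw : d.fst ∈ q.support := by
      rcases hd with hd | hd
      · exact q.dart_fst_mem_support_of_mem_darts hd
      · simpa using q.dart_snd_mem_support_of_mem_darts hd
    refine ⟨d.fst, hw, ?_⟩
    simp only [Set.mem_compl_iff, not_not, Finset.coe_image, Set.mem_image, Finset.mem_coe]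
    exact ⟨Sum.inr d, hxY, rfl⟩

lemma univ_compl_acyclic {W : Type} [Fintype W] (H : SimpleGraph W) :
    (H.induce ((↑(Finset.univ : Finset W) : Set W)ᶜ)).IsAcyclic := by
  intro v c hc
  exact absurd v.2 (by simp)

/-- The 2-subdivision `Ĝ` of `G` admits a minimum feedback vertex set containing no
subdivision vertex, and the feedback vertex set numbers of `G` and `Ĝ` are equal. -/
theorem stmt_10 {V : Type} [Fintype V] [DecidableEq V] (G : SimpleGraph V)
    [DecidableRel G.Adj] :
    (∃ Y : Finset (V ⊕ G.Dart),
      ((subdiv2 G).induce ((↑Y : Set (V ⊕ G.Dart))ᶜ)).IsAcyclic ∧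
      Y.card = fvsNum (subdiv2 G) ∧
      ∀ x ∈ Y, ∃ u : V, x = Sum.inl u) ∧
    fvsNum G = fvsNum (subdiv2 G) := by
  classical
  have hne1 : {k | ∃ Y : Finset V, Y.card = k ∧
      (G.induce ((↑Y : Set V)ᶜ)).IsAcyclic}.Nonempty :=
    ⟨_, Finset.univ, rfl, univ_compl_acyclic G⟩
  have hne2 : {k | ∃ Y : Finset (V ⊕ G.Dart), Y.card = k ∧
      ((subdiv2 G).induce ((↑Y : Set (V ⊕ G.Dart))ᶜ)).IsAcyclic}.Nonempty :=
    ⟨_, Finset.univ, rfl, univ_compl_acyclic _⟩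
  obtain ⟨S, hScard, hSacyc⟩ := Nat.sInf_mem hne1
  obtain ⟨Y', hYcard, hYacyc⟩ := Nat.sInf_mem hne2
  have hScard' : S.card = fvsNum G := hScard
  have hYcard' : Y'.card = fvsNum (subdiv2 G) := hYcard
  have hle1 : fvsNum (subdiv2 G) ≤ fvsNum G := by
    apply Nat.sInf_le
    refine ⟨S.image Sum.inl, ?_, image_inl_acyclic S hSacyc⟩
    rw [Finset.card_image_of_injective _ Sum.inl_injective, hScard']
  have hle2 : fvsNum G ≤ fvsNum (subdiv2 G) := by
    calc fvsNum G ≤ (Y'.image (Sum.elim id (fun d : G.Dart => d.fst))).card :=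
        Nat.sInf_le ⟨_, rfl, image_proj_acyclic Y' hYacyc⟩
      _ ≤ Y'.card := Finset.card_image_le
      _ = fvsNum (subdiv2 G) := hYcard'
  have heq := le_antisymm hle2 hle1
  refine ⟨⟨S.image Sum.inl, image_inl_acyclic S hSacyc, ?_, ?_⟩, heq⟩
  · rw [Finset.card_image_of_injective _ Sum.inl_injective, hScard', heq]
  · intro x hx
    obtain ⟨u, _, rfl⟩ := Finset.mem_image.1 hx
    exact ⟨u, rfl⟩
end

section
/- Let G be a graph with a linear arrangement ℓ of cutwidth ctw, and let Ĝ be obtained from G by subdividing every edge twice. Then Ĝ admits a path decomposition of width at most ctw in which every bag contains at most two original (non-subdivision) vertices. -/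
lemma lexle (N a s b t : ℕ) (hs : s ≤ N) (ht : t ≤ N) :
    (N+1)*a + s ≤ (N+1)*b + t ↔ (a < b ∨ (a = b ∧ s ≤ t)) := by
  constructor
  · intro h
    rcases Nat.lt_trichotomy a b with h' | h' | h'
    · exact Or.inl h'
    · subst h'; exact Or.inr ⟨rfl, by omega⟩
    · exfalso
      have h2 : (N+1)*(b+1) ≤ (N+1)*a := Nat.mul_le_mul_left _ h'
      rw [Nat.mul_succ] at h2
      linarith
  · rintro (h | ⟨rfl, h⟩)
    · have h2 : (N+1)*(a+1) ≤ (N+1)*b := Nat.mul_le_mul_left _ h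
      rw [Nat.mul_succ] at h2
      linarith
    · linarith

/-- start index of the bag interval of a vertex of the subdivision. -/
def sdLo {V : Type} (G : SimpleGraph V) {n : ℕ} (ℓ : Fin n ≃ V) : V ⊕ G.Dart → ℕ
  | Sum.inl v => (2*n+1) * (ℓ.symm v : ℕ) + n
  | Sum.inr d =>
      if (ℓ.symm d.toProd.1 : ℕ) < (ℓ.symm d.toProd.2 : ℕ) then
        (2*n+1) * (ℓ.symm d.toProd.1 : ℕ) + (n+1+(ℓ.symm d.toProd.2 : ℕ))
      else
        (2*n+1) * (ℓ.symm d.toProd.1 : ℕ) + (ℓ.symm d.toProd.2 : ℕ)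

/-- end index of the bag interval of a vertex of the subdivision. -/
def sdHi {V : Type} (G : SimpleGraph V) {n : ℕ} (ℓ : Fin n ≃ V) : V ⊕ G.Dart → ℕ
  | Sum.inl v => (2*n+1) * (ℓ.symm v : ℕ) + 2*n
  | Sum.inr d =>
      if (ℓ.symm d.toProd.1 : ℕ) < (ℓ.symm d.toProd.2 : ℕ) then
        (2*n+1) * (ℓ.symm d.toProd.2 : ℕ) + (ℓ.symm d.toProd.1 : ℕ)
      else
        (2*n+1) * (ℓ.symm d.toProd.1 : ℕ) + n

theorem stmt_aux {V : Type} [Fintype V] [DecidableEq V] (G : SimpleGraph V)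
    [DecidableRel G.Adj] {n : ℕ} (ℓ : Fin n ≃ V) (ctw : ℕ)
    (hctw : ∀ i : ℕ, cutNum G ℓ i ≤ ctw) :
    ∃ (r : ℕ) (B : Fin r → Finset (V ⊕ G.Dart)),
      (∀ x, ∃ i, x ∈ B i) ∧
      (∀ x y, (subdiv2 G).Adj x y → ∃ i, x ∈ B i ∧ y ∈ B i) ∧
      (∀ i j k : Fin r, i ≤ j → j ≤ k → ∀ x, x ∈ B i → x ∈ B k → x ∈ B j) ∧
      (∀ i, (B i).card ≤ ctw + 1) ∧
      (∀ i, ((B i).filter (fun x => x.isLeft)).card ≤ 2) := by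
  classical
  set r := n * (2*n+1) with hr
  set B : Fin r → Finset (V ⊕ G.Dart) :=
    fun i => Finset.univ.filter (fun x => sdLo G ℓ x ≤ (i : ℕ) ∧ (i : ℕ) ≤ sdHi G ℓ x) with hB
  -- position function
  have hposlt : ∀ v : V, (ℓ.symm v : ℕ) < n := fun v => (ℓ.symm v).isLt
  have hposinj : ∀ u v : V, (ℓ.symm u : ℕ) = (ℓ.symm v : ℕ) → u = v := by
    intro u v h
    have := Fin.val_injective h
    exact ℓ.symm.injective this
  have hdne : ∀ d : G.Dart, (ℓ.symm d.toProd.1 : ℕ) ≠ (ℓ.symm d.toProd.2 : ℕ) := by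
    intro d h
    exact d.adj.ne (hposinj _ _ h)
  have hle : ∀ x, sdLo G ℓ x ≤ sdHi G ℓ x := by
    rintro (v | d)
    · simp only [sdLo, sdHi]
      omega
    · simp only [sdLo, sdHi]
      set a := (ℓ.symm d.toProd.1 : ℕ) with hadef
      set b := (ℓ.symm d.toProd.2 : ℕ) with hbdef
      have hbn := hposlt d.toProd.2
      split_ifs with h
      · have h2 : (2*n+1)*(a+1) ≤ (2*n+1)*b := Nat.mul_le_mul_left _ h
        rw [Nat.mul_succ] at h2
        linarith
      · omega
  have hbnd : ∀ (a s : ℕ), a < n → s ≤ 2*n → (2*n+1) * a + s < r := by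
    intro a s ha hs
    have h2 : (2*n+1)*(a+1) ≤ (2*n+1)*n := Nat.mul_le_mul_left _ ha
    rw [Nat.mul_succ] at h2
    have h3 : (2*n+1)*n = n*(2*n+1) := Nat.mul_comm _ _
    rw [hr]
    linarith
  have hlt : ∀ x, sdHi G ℓ x < r := by
    rintro (v | d)
    · exact hbnd _ _ (hposlt v) (le_refl _)
    · simp only [sdHi]
      have h1 := hposlt d.toProd.1
      have h2 := hposlt d.toProd.2
      split_ifs with h
      · exact hbnd _ _ (hposlt d.toProd.2) (by omega)
      · exact hbnd _ _ (hposlt d.toProd.1) (by omega)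
  have hmem : ∀ (i : Fin r) x, x ∈ B i ↔ sdLo G ℓ x ≤ (i:ℕ) ∧ (i:ℕ) ≤ sdHi G ℓ x := by
    intro i x; simp [hB]
  have hdec : ∀ i : Fin r, (2*n+1) * ((i:ℕ)/(2*n+1)) + (i:ℕ)%(2*n+1) = (i:ℕ) ∧
      (i:ℕ)%(2*n+1) ≤ 2*n ∧ (i:ℕ)/(2*n+1) < n := by
    intro i
    have h0 : 0 < 2*n+1 := by omega
    refine ⟨Nat.div_add_mod _ _, by have := Nat.mod_lt (i:ℕ) h0; omega, ?_⟩
    rw [Nat.div_lt_iff_lt_mul h0]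
    exact hr ▸ i.isLt
  have hmeml : ∀ (i : Fin r) (v : V), Sum.inl v ∈ B i →
      (ℓ.symm v : ℕ) = (i:ℕ)/(2*n+1) ∧ n ≤ (i:ℕ)%(2*n+1) := by
    intro i v h
    obtain ⟨h1, h2, h3⟩ := hdec i
    obtain ⟨hlo, hhi⟩ := (hmem i _).1 h
    simp only [sdLo, sdHi] at hlo hhi
    rw [← h1] at hlo hhi
    have e1 := (lexle (2*n) _ n _ _ (by omega) h2).mp hlo
    have e2 := (lexle (2*n) _ _ _ (2*n) h2 (le_refl _)).mp hhi
    omega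
  have hmemA : ∀ (i : Fin r) (d : G.Dart),
      (ℓ.symm d.toProd.1 : ℕ) < (ℓ.symm d.toProd.2 : ℕ) → Sum.inr d ∈ B i →
      ((ℓ.symm d.toProd.1 : ℕ) < (i:ℕ)/(2*n+1) ∨ ((ℓ.symm d.toProd.1 : ℕ) = (i:ℕ)/(2*n+1) ∧
          n+1+(ℓ.symm d.toProd.2 : ℕ) ≤ (i:ℕ)%(2*n+1))) ∧
      ((i:ℕ)/(2*n+1) < (ℓ.symm d.toProd.2 : ℕ) ∨ ((i:ℕ)/(2*n+1) = (ℓ.symm d.toProd.2 : ℕ) ∧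
          (i:ℕ)%(2*n+1) ≤ (ℓ.symm d.toProd.1 : ℕ))) := by
    intro i d hab h
    obtain ⟨h1, h2, h3⟩ := hdec i
    have hb := hposlt d.toProd.2
    have ha := hposlt d.toProd.1
    obtain ⟨hlo, hhi⟩ := (hmem i _).1 h
    simp only [sdLo, sdHi, if_pos hab] at hlo hhi
    rw [← h1] at hlo hhi
    exact ⟨(lexle (2*n) _ _ _ _ (by omega) h2).mp hlo,
      (lexle (2*n) _ _ _ _ h2 (by omega)).mp hhi⟩
  have hmemB : ∀ (i : Fin r) (d : G.Dart),
      ¬ ((ℓ.symm d.toProd.1 : ℕ) < (ℓ.symm d.toProd.2 : ℕ)) → Sum.inr d ∈ B i →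
      (i:ℕ)/(2*n+1) = (ℓ.symm d.toProd.1 : ℕ) ∧ (ℓ.symm d.toProd.2 : ℕ) ≤ (i:ℕ)%(2*n+1) ∧
        (i:ℕ)%(2*n+1) ≤ n := by
    intro i d hab h
    obtain ⟨h1, h2, h3⟩ := hdec i
    have hb := hposlt d.toProd.2
    have ha := hposlt d.toProd.1
    obtain ⟨hlo, hhi⟩ := (hmem i _).1 h
    simp only [sdLo, sdHi, if_neg hab] at hlo hhi
    rw [← h1] at hlo hhi
    have e1 := (lexle (2*n) _ _ _ _ (by omega) h2).mp hlo
    have e2 := (lexle (2*n) _ _ _ n h2 (by omega)).mp hhi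
    omega
  refine ⟨r, B, ?_, ?_, ?_, ?_, ?_⟩
  · -- cover
    intro x
    exact ⟨⟨sdLo G ℓ x, lt_of_le_of_lt (hle x) (hlt x)⟩, (hmem _ _).2 ⟨le_refl _, hle x⟩⟩
  · -- edges
    have hshare : ∀ x y, sdLo G ℓ x ≤ sdHi G ℓ y → sdLo G ℓ y ≤ sdHi G ℓ x →
        ∃ i, x ∈ B i ∧ y ∈ B i := by
      intro x y h1 h2
      refine ⟨⟨max (sdLo G ℓ x) (sdLo G ℓ y),
        max_lt (lt_of_le_of_lt (hle x) (hlt x)) (lt_of_le_of_lt (hle y) (hlt y))⟩,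
        (hmem _ _).2 ⟨le_max_left _ _, max_le (hle x) h2⟩,
        (hmem _ _).2 ⟨le_max_right _ _, max_le h1 (hle y)⟩⟩
    have hvd : ∀ d : G.Dart, sdLo G ℓ (Sum.inl d.toProd.1) ≤ sdHi G ℓ (Sum.inr d) ∧
        sdLo G ℓ (Sum.inr d) ≤ sdHi G ℓ (Sum.inl d.toProd.1) := by
      intro d
      simp only [sdLo, sdHi]
      have hab := hdne d
      have ha := hposlt d.toProd.1
      have hb := hposlt d.toProd.2
      set a := (ℓ.symm d.toProd.1 : ℕ)
      set b := (ℓ.symm d.toProd.2 : ℕ)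
      split_ifs with h
      · have h2 : (2*n+1)*(a+1) ≤ (2*n+1)*b := Nat.mul_le_mul_left _ h
        rw [Nat.mul_succ] at h2
        constructor <;> linarith
      · constructor <;> omega
    have hdd : ∀ d : G.Dart, sdLo G ℓ (Sum.inr d) ≤ sdHi G ℓ (Sum.inr d.symm) ∧
        sdLo G ℓ (Sum.inr d.symm) ≤ sdHi G ℓ (Sum.inr d) := by
      intro d
      simp only [sdLo, sdHi, SimpleGraph.Dart.symm_toProd, Prod.fst_swap, Prod.snd_swap]
      have hab := hdne d
      have ha := hposlt d.toProd.1
      have hb := hposlt d.toProd.2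
      set a := (ℓ.symm d.toProd.1 : ℕ)
      set b := (ℓ.symm d.toProd.2 : ℕ)
      split_ifs with h1 h2 h2
      · omega
      · have h3 : (2*n+1)*(a+1) ≤ (2*n+1)*b := Nat.mul_le_mul_left _ h1
        rw [Nat.mul_succ] at h3
        constructor <;> linarith
      · have h3 : (2*n+1)*(b+1) ≤ (2*n+1)*a := Nat.mul_le_mul_left _ h2
        rw [Nat.mul_succ] at h3
        constructor <;> linarith
      · omega
    intro x y hadj
    rw [subdiv2, SimpleGraph.fromRel_adj] at hadj
    obtain ⟨hne, hrel⟩ := hadj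
    rcases x with u | d <;> rcases y with u' | d'
    · rcases hrel with h | h <;> exact h.elim
    · rcases hrel with h | h
      · subst h
        exact hshare _ _ (hvd d').1 (hvd d').2
      · exact h.elim
    · rcases hrel with h | h
      · exact h.elim
      · subst h
        obtain ⟨i, h1, h2⟩ := hshare _ _ (hvd d).1 (hvd d).2
        exact ⟨i, h2, h1⟩
    · have hsymm : d' = d.symm := by
        rcases hrel with h | h
        · exact h
        · rw [h, SimpleGraph.Dart.symm_symm]
      subst hsymm
      exact hshare _ _ (hdd d).1 (hdd d).2
  · -- convexity
    intro i j k hij hjk x hxi hxk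
    rw [hmem] at *
    rw [Fin.le_def] at hij hjk
    omega
  · -- size
    intro i
    set q := (i:ℕ)/(2*n+1) with hqdef
    set t := (i:ℕ)%(2*n+1) with htdef
    obtain ⟨hd1, hd2, hd3⟩ := hdec i
    set c := if t ≤ n then q else q + 1 with hcdef
    set S : Set (Sym2 V) := {e : Sym2 V | e ∈ G.edgeSet ∧
      ∃ u w, e = s(u, w) ∧ ((ℓ.symm u : ℕ) < c ∧ c ≤ (ℓ.symm w : ℕ))} with hSdef
    set F : Finset (Sym2 V) := S.toFinset with hFdef
    have hF : F.card = cutNum G ℓ c := by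
      rw [cutNum]
      exact (Set.ncard_eq_toFinset_card' S).symm
    set ψ : V ⊕ G.Dart → Option (Sym2 V) := fun x =>
      match x with
      | Sum.inl _ => none
      | Sum.inr d => if (ℓ.symm d.toProd.1 : ℕ) = q ∧ (ℓ.symm d.toProd.2 : ℕ) = t then none
          else some s(d.toProd.1, d.toProd.2) with hψdef
    have hsub : (B i).image ψ ⊆ insert none (F.image some) := by
      intro o ho
      rw [Finset.mem_image] at ho
      obtain ⟨x, hx, rfl⟩ := ho
      rcases x with v | d
      · exact Finset.mem_insert_self _ _
      · by_cases hsp : (ℓ.symm d.toProd.1 : ℕ) = q ∧ (ℓ.symm d.toProd.2 : ℕ) = t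
        · simp only [hψdef, if_pos hsp]
          exact Finset.mem_insert_self _ _
        · simp only [hψdef, if_neg hsp]
          refine Finset.mem_insert_of_mem ?_
          rw [Finset.mem_image]
          refine ⟨s(d.toProd.1, d.toProd.2), ?_, rfl⟩
          rw [hFdef, Set.mem_toFinset]
          refine ⟨d.adj, ?_⟩
          by_cases hab : (ℓ.symm d.toProd.1 : ℕ) < (ℓ.symm d.toProd.2 : ℕ)
          · obtain ⟨e1, e2⟩ := hmemA i d hab hx
            by_cases htn : t ≤ n
            · refine ⟨d.toProd.1, d.toProd.2, rfl, ?_, ?_⟩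
              · rw [hcdef, if_pos htn]; omega
              · rw [hcdef, if_pos htn]; omega
            · have hb := hposlt d.toProd.2
              have ha := hposlt d.toProd.1
              refine ⟨d.toProd.1, d.toProd.2, rfl, ?_, ?_⟩
              · rw [hcdef, if_neg htn]; omega
              · rw [hcdef, if_neg htn]; omega
          · obtain ⟨e1, e2, e3⟩ := hmemB i d hab hx
            have hab' : (ℓ.symm d.toProd.2 : ℕ) < (ℓ.symm d.toProd.1 : ℕ) := by
              have := hdne d; omega
            refine ⟨d.toProd.2, d.toProd.1, Sym2.eq_swap, ?_, ?_⟩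
            · rw [hcdef, if_pos e3]; omega
            · rw [hcdef, if_pos e3]; omega
    have hinj : Set.InjOn ψ ↑(B i) := by
      intro x hx y hy hxy
      rw [Finset.mem_coe] at hx hy
      rcases x with v | d <;> rcases y with v' | d'
      · have e1 := hmeml i v hx
        have e2 := hmeml i v' hy
        exact congrArg Sum.inl (hposinj _ _ (by omega))
      · by_cases hsp : (ℓ.symm d'.toProd.1 : ℕ) = q ∧ (ℓ.symm d'.toProd.2 : ℕ) = t
        · exfalso
          have e1 := hmeml i v hx
          have := hposlt d'.toProd.2
          omega
        · exfalso
          simp only [hψdef, if_neg hsp] at hxy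
          exact nomatch hxy
      · by_cases hsp : (ℓ.symm d.toProd.1 : ℕ) = q ∧ (ℓ.symm d.toProd.2 : ℕ) = t
        · exfalso
          have e1 := hmeml i v' hy
          have := hposlt d.toProd.2
          omega
        · exfalso
          simp only [hψdef, if_neg hsp] at hxy
          exact nomatch hxy
      · by_cases hsp : (ℓ.symm d.toProd.1 : ℕ) = q ∧ (ℓ.symm d.toProd.2 : ℕ) = t <;>
          by_cases hsp' : (ℓ.symm d'.toProd.1 : ℕ) = q ∧ (ℓ.symm d'.toProd.2 : ℕ) = t
        · refine congrArg Sum.inr (SimpleGraph.Dart.ext _ _ (Prod.ext ?_ ?_))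
          · exact hposinj _ _ (by omega)
          · exact hposinj _ _ (by omega)
        · exfalso
          simp only [hψdef, if_pos hsp, if_neg hsp'] at hxy
          exact nomatch hxy
        · exfalso
          simp only [hψdef, if_neg hsp, if_pos hsp'] at hxy
          exact nomatch hxy
        · simp only [hψdef, if_neg hsp, if_neg hsp', Option.some_inj] at hxy
          rw [Sym2.eq_iff] at hxy
          rcases hxy with ⟨ha1, ha2⟩ | ⟨ha1, ha2⟩
          · exact congrArg Sum.inr (SimpleGraph.Dart.ext _ _ (Prod.ext ha1 ha2))
          · exfalso
            by_cases hab : (ℓ.symm d.toProd.1 : ℕ) < (ℓ.symm d.toProd.2 : ℕ)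
            · have e1 := hmemA i d hab hx
              have hab' : ¬ ((ℓ.symm d'.toProd.1 : ℕ) < (ℓ.symm d'.toProd.2 : ℕ)) := by
                rw [← ha2, ← ha1]; omega
              have e2 := hmemB i d' hab' hy
              rw [← ha2, ← ha1] at e2 hsp'
              omega
            · have e1 := hmemB i d hab hx
              have hne := hdne d
              have hab' : (ℓ.symm d'.toProd.1 : ℕ) < (ℓ.symm d'.toProd.2 : ℕ) := by
                rw [← ha2, ← ha1]; omega
              have e2 := hmemA i d' hab' hy
              rw [← ha2, ← ha1] at e2 hsp'
              omega
    calc (B i).card = ((B i).image ψ).card := (Finset.card_image_of_injOn hinj).symm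
      _ ≤ (insert none (F.image some)).card := Finset.card_le_card hsub
      _ ≤ (F.image some).card + 1 := Finset.card_insert_le _ _
      _ ≤ F.card + 1 := Nat.add_le_add_right Finset.card_image_le 1
      _ = cutNum G ℓ c + 1 := by rw [hF]
      _ ≤ ctw + 1 := Nat.add_le_add_right (hctw c) 1
  · -- at most 2 original vertices
    intro i
    have hc1 : ((B i).filter (fun x => x.isLeft)).card ≤ 1 := by
      refine Finset.card_le_one.mpr ?_
      intro x hx y hy
      rw [Finset.mem_filter] at hx hy
      obtain ⟨hx1, hx2⟩ := hx
      obtain ⟨hy1, hy2⟩ := hy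
      rcases x with v | d
      · rcases y with v' | d'
        · have e1 := hmeml i v hx1
          have e2 := hmeml i v' hy1
          exact congrArg Sum.inl (hposinj _ _ (by omega))
        · simp at hy2
      · simp at hx2
    omega

/-- If `G` has a linear arrangement of cutwidth at most `ctw`, then its 2-subdivision admits a
path decomposition of width at most `ctw` in which every bag contains at most two original
(non-subdivision) vertices. -/
theorem stmt_11 {V : Type} [Fintype V] [DecidableEq V] (G : SimpleGraph V)
    [DecidableRel G.Adj] (ℓ : Fin (Fintype.card V) ≃ V) (ctw : ℕ)
    (hctw : ∀ i : ℕ, cutNum G ℓ i ≤ ctw) :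
    ∃ (r : ℕ) (B : Fin r → Finset (V ⊕ G.Dart)),
      (∀ x, ∃ i, x ∈ B i) ∧
      (∀ x y, (subdiv2 G).Adj x y → ∃ i, x ∈ B i ∧ y ∈ B i) ∧
      (∀ i j k : Fin r, i ≤ j → j ≤ k → ∀ x, x ∈ B i → x ∈ B k → x ∈ B j) ∧
      (∀ i, (B i).card ≤ ctw + 1) ∧
      (∀ i, ((B i).filter (fun x => x.isLeft)).card ≤ 2) :=
  stmt_aux G ℓ ctw hctw
end

section
/- Let M ∈ {0,1}^{C×C} be a symmetric consistency matrix, and for disjoint X, Y ⊆ V and colorings x ∈ C^X, y ∈ C^Y say x is compatible with y (x ∼ y) if x and y agree on X ∩ Y and M[x(u), y(v)] = 1 for every edge {u,v} with u ∈ X and v ∈ Y \ X. Let 2 ≤ i ≤ n and let X_{i−1}, X_i, Y_i be the cut sets of a linear arrangement. Then for z ∈ C^{X_{i−1}}, c ∈ C^{X_i}, y ∈ C^{Y_i}: (c ∼ y and z ∼ c) holds if and only if z restricted to X_i \ {v_i} equals c restricted to X_i \ {v_i}, z ∼ [v_i ↦ c(v_i)], [v_i ↦ c(v_i)] ∼ y,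 and z ∼ y. -/
/-- Compatibility `x ∼ y` of colorings: agreement on `X ∩ Y` and `M`-consistency on all edges
from `X` to `Y \ X`. -/
def Compat {V C : Type} (G : SimpleGraph V) (M : C → C → Prop) (X Y : Set V)
    (x : ↥X → C) (y : ↥Y → C) : Prop :=
  (∀ v (hx : v ∈ X) (hy : v ∈ Y), x ⟨v, hx⟩ = y ⟨v, hy⟩) ∧
  (∀ u v (hu : u ∈ X) (hv : v ∈ Y), v ∉ X → G.Adj u v → M (x ⟨u, hu⟩) (y ⟨v, hv⟩))

/-- For `z ∈ C^{X_{i-1}}`, `c ∈ C^{X_i}`, `y ∈ C^{Y_i}`: `c ∼ y` and `z ∼ c` hold iff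
`z` and `c` agree on `X_i \ {v_i}`, `z ∼ [v_i ↦ c(v_i)]`, `[v_i ↦ c(v_i)] ∼ y`, and `z ∼ y`. -/
theorem stmt_13 {V C : Type} [Fintype V] (G : SimpleGraph V)
    (M : C → C → Prop) (hM : Symmetric M)
    {n : ℕ} (ℓ : Fin n ≃ V) (i j : Fin n) (hij : (i : ℕ) = (j : ℕ) + 1)
    (hsub : Xset G ℓ i \ {ℓ i} ⊆ Xset G ℓ j)
    (z : ↥(Xset G ℓ j) → C) (c : ↥(Xset G ℓ i) → C) (y : ↥(Yset G ℓ i) → C) :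
    (Compat G M (Xset G ℓ i) (Yset G ℓ i) c y ∧
     Compat G M (Xset G ℓ j) (Xset G ℓ i) z c) ↔
    ((∀ v (hv : v ∈ Xset G ℓ i) (hne : v ≠ ℓ i), z ⟨v, hsub ⟨hv, hne⟩⟩ = c ⟨v, hv⟩) ∧
     Compat G M (Xset G ℓ j) {ℓ i} z
       (fun _ => c ⟨ℓ i, Set.mem_union_right _ rfl⟩) ∧
     Compat G M {ℓ i} (Yset G ℓ i)
       (fun _ => c ⟨ℓ i, Set.mem_union_right _ rfl⟩) y ∧
     Compat G M (Xset G ℓ j) (Yset G ℓ i) z y) := by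

  have hXi_le : ∀ v, v ∈ Xset G ℓ i → ℓ.symm v ≤ i := by
    intro v hv
    rcases hv with h | h
    · exact h.1
    · simp only [Set.mem_singleton_iff] at h; subst h; simp
  have hXj_le : ∀ v, v ∈ Xset G ℓ j → ℓ.symm v ≤ j := by
    intro v hv
    rcases hv with h | h
    · exact h.1
    · simp only [Set.mem_singleton_iff] at h; subst h; simp
  have hYi_gt : ∀ v, v ∈ Yset G ℓ i → i < ℓ.symm v := fun v hv => hv.1
  have hXiYi : ∀ v, v ∈ Xset G ℓ i → v ∈ Yset G ℓ i → False := fun v hx hy =>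
    absurd (hXi_le v hx) (not_le.mpr (hYi_gt v hy))
  have hXjYi : ∀ v, v ∈ Xset G ℓ j → v ∈ Yset G ℓ i → False := by
    intro v hx hy
    have h1 := Fin.le_def.mp (hXj_le v hx)
    have h2 := Fin.lt_def.mp (hYi_gt v hy)
    omega
  have hviXj : ℓ i ∉ Xset G ℓ j := by
    intro h
    have h1 := Fin.le_def.mp (hXj_le _ h)
    simp only [Equiv.symm_apply_apply] at h1
    omega
  have hYne : ∀ v, v ∈ Yset G ℓ i → v ≠ ℓ i := by
    intro v hv h
    have := Fin.lt_def.mp (hYi_gt v hv)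
    subst h
    simp only [Equiv.symm_apply_apply] at this
    omega
  have hXjXi : ∀ u v, u ∈ Xset G ℓ j → v ∈ Yset G ℓ i → G.Adj u v → u ∈ Xset G ℓ i := by
    intro u v hu hv hadj
    left
    refine ⟨?_, v, hadj, hv.1⟩
    have h1 := Fin.le_def.mp (hXj_le u hu)
    exact Fin.le_def.mpr (by omega)
  constructor
  · rintro ⟨⟨_, A2⟩, ⟨B1, B2⟩⟩
    refine ⟨?_, ⟨?_, ?_⟩, ⟨?_, ?_⟩, ⟨?_, ?_⟩⟩
    · intro v hv hne
      exact B1 v (hsub ⟨hv, hne⟩) hv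
    · intro v hx hy
      obtain rfl : v = ℓ i := hy
      exact absurd hx hviXj
    · intro u v hu hv hnot hadj
      obtain rfl : v = ℓ i := hv
      exact B2 u (ℓ i) hu (Set.mem_union_right _ rfl) hnot hadj
    · intro v hx hy
      obtain rfl : v = ℓ i := hx
      exact absurd (hYne _ hy) (by simp)
    · intro u v hu hv hnot hadj
      obtain rfl : u = ℓ i := hu
      exact A2 (ℓ i) v (Set.mem_union_right _ rfl) hv (fun h => hXiYi v h hv) hadj
    · intro v hx hy
      exact absurd hy (fun h => hXjYi v hx h)
    · intro u v hu hv hnot hadj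
      have huXi := hXjXi u v hu hv hadj
      rw [B1 u hu huXi]
      exact A2 u v huXi hv (fun h => hXiYi v h hv) hadj
  · rintro ⟨R1, ⟨_, R2⟩, ⟨_, R3⟩, ⟨_, R4⟩⟩
    refine ⟨⟨?_, ?_⟩, ⟨?_, ?_⟩⟩
    · intro v hx hy
      exact absurd hy (fun h => hXiYi v hx h)
    · intro u v hu hv hnot hadj
      by_cases hne : u = ℓ i
      · subst hne
        exact R3 (ℓ i) v rfl hv (fun h => hYne v hv h) hadj
      · rw [← R1 u hu hne]
        exact R4 u v (hsub ⟨hu, hne⟩) hv (fun h => hXjYi v h hv) hadj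
    · intro v hx hy
      by_cases hne : v = ℓ i
      · exact absurd (hne ▸ hx) hviXj
      · exact R1 v hy hne
    · intro u v hu hv hnot hadj
      by_cases hne : v = ℓ i
      · subst hne
        exact R2 u (ℓ i) hu rfl hnot hadj
      · exact absurd (hsub ⟨hv, hne⟩) hnot
end

section
/- Let T_i[c, K, W] denote the number of colorings φ ∈ C^{V_i} extending c ∈ C^{X_i} such that exactly K vertices of V_i receive special colors (colors in Q) with total weight W, every vertex v satisfies φ(v) ∈ a(v), and M[φ(u), φ(v)] = 1 for every edge of G[V_i]. Then for 2 ≤ i ≤ n: T_i[c, K, W] = [c(v_i) ∈ a(v_i)] · Σ over z ∈ C^{X_{i−1}} with z ∼ c of T_{i−1}[z, K − [c(v_i) ∈ Q], W − ω(v_i)·[c(v_i) ∈ Q]]. -/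
open scoped Classical

/-- `V i`: the first `i+1` vertices of the arrangement (positions `≤ i`). -/
def Vset {V : Type} {n : ℕ} (ℓ : Fin n ≃ V) (i : Fin n) : Set V :=
  {v | ℓ.symm v ≤ i}

/-- `T i [c, K, W]`: the number of colorings `φ` of `V_i` extending `c : X_i → C` such that
exactly `K` vertices get special colors (colors in `Q`), of total weight `W`, every vertex gets
an allowed color, and the endpoints of every edge of `G[V_i]` get `M`-consistent colors. -/
noncomputable def T {V C : Type} [Fintype V] [Fintype C] (G : SimpleGraph V)
    {n : ℕ} (ℓ : Fin n ≃ V) (M : C → C → Prop) (Q : Finset C) (a : V → Finset C)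
    (ω : V → ℕ) (i : Fin n) (c : ↥(Xset G ℓ i) → C) (K W : ℤ) : ℕ :=
  Nat.card {φ : ↥(Vset ℓ i) → C //
    (∀ v (hv : v ∈ Xset G ℓ i) (hv' : v ∈ Vset ℓ i), φ ⟨v, hv'⟩ = c ⟨v, hv⟩) ∧
    ((Nat.card {x : ↥(Vset ℓ i) // φ x ∈ Q} : ℤ) = K) ∧
    ((∑ x : ↥(Vset ℓ i), if φ x ∈ Q then (ω x.1 : ℤ) else 0) = W) ∧
    (∀ x : ↥(Vset ℓ i), φ x ∈ a x.1) ∧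
    (∀ x y : ↥(Vset ℓ i), G.Adj x.1 y.1 → M (φ x) (φ y))}

def Pred {V C : Type} [Fintype V] [Fintype C] (G : SimpleGraph V)
    {n : ℕ} (ℓ : Fin n ≃ V) (M : C → C → Prop) (Q : Finset C) (a : V → Finset C)
    (ω : V → ℕ) (i : Fin n) (c : ↥(Xset G ℓ i) → C) (K W : ℤ)
    (φ : ↥(Vset ℓ i) → C) : Prop :=
    (∀ v (hv : v ∈ Xset G ℓ i) (hv' : v ∈ Vset ℓ i), φ ⟨v, hv'⟩ = c ⟨v, hv⟩) ∧
    ((Nat.card {x : ↥(Vset ℓ i) // φ x ∈ Q} : ℤ) = K) ∧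
    ((∑ x : ↥(Vset ℓ i), if φ x ∈ Q then (ω x.1 : ℤ) else 0) = W) ∧
    (∀ x : ↥(Vset ℓ i), φ x ∈ a x.1) ∧
    (∀ x y : ↥(Vset ℓ i), G.Adj x.1 y.1 → M (φ x) (φ y))

lemma T_eq {V C : Type} [Fintype V] [Fintype C] (G : SimpleGraph V)
    {n : ℕ} (ℓ : Fin n ≃ V) (M : C → C → Prop) (Q : Finset C) (a : V → Finset C)
    (ω : V → ℕ) (i : Fin n) (c : ↥(Xset G ℓ i) → C) (K W : ℤ) :
    T G ℓ M Q a ω i c K W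
      = (Finset.univ.filter (Pred G ℓ M Q a ω i c K W)).card := by
  unfold Pred
  rw [T, Nat.card_eq_fintype_card, Fintype.card_subtype]
  congr

lemma card_Q_eq {V C : Type} [Fintype V] [Fintype C] {S : Set V} (Q : Finset C) (φ : ↥S → C) :
    (Nat.card {x : ↥S // φ x ∈ Q} : ℤ) = ∑ x : ↥S, if φ x ∈ Q then (1:ℤ) else 0 := by
  rw [Nat.card_eq_fintype_card, Fintype.card_subtype, Finset.card_filter]
  push_cast
  rfl

lemma sum_split {V : Type} [Fintype V] {β : Type} [AddCommMonoid β] {S Tt : Set V} {v : V}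
    (hTS : Tt ⊆ S) (hv : v ∈ S) (hvT : v ∉ Tt) (hS : ∀ x ∈ S, x ∉ Tt → x = v)
    (f : ↥S → β) :
    ∑ x : ↥S, f x = (∑ x : ↥Tt, f ⟨x.1, hTS x.2⟩) + f ⟨v, hv⟩ := by
  rw [← Finset.sum_erase_add Finset.univ f (Finset.mem_univ (⟨v, hv⟩ : ↥S))]
  congr 1
  refine Finset.sum_bij'
    (fun (x : ↥S) (hx : x ∈ Finset.univ.erase ⟨v, hv⟩) =>
      (⟨x.1, by
        by_contra h
        exact (Finset.mem_erase.mp hx).1 (Subtype.ext (hS x.1 x.2 h))⟩ : ↥Tt))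
    (fun (x : ↥Tt) (_ : x ∈ (Finset.univ : Finset ↥Tt)) => (⟨x.1, hTS x.2⟩ : ↥S))
    (fun x hx => Finset.mem_univ _)
    (fun x hx => Finset.mem_erase.mpr ⟨?_, Finset.mem_univ _⟩)
    (fun x hx => rfl) (fun x hx => rfl) (fun x hx => rfl)
  intro h
  apply hvT
  have hx1 : (x : V) = v := congrArg Subtype.val h
  rw [← hx1]; exact x.2

theorem stmt_aux_s15 {V C : Type} [Fintype V] [Fintype C]
    (G : SimpleGraph V) {n : ℕ} (ℓ : Fin n ≃ V)
    (M : C → C → Prop) (hM : Symmetric M) (Q : Finset C) (a : V → Finset C) (ω : V → ℕ)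
    (i j : Fin n) (hij : (i : ℕ) = (j : ℕ) + 1)
    (c : ↥(Xset G ℓ i) → C) (K W : ℤ) :
    T G ℓ M Q a ω i c K W =
      (if c ⟨ℓ i, Set.mem_union_right _ rfl⟩ ∈ a (ℓ i) then 1 else 0) *
        ∑ z ∈ Finset.univ.filter
            (fun z : ↥(Xset G ℓ j) → C => Compat G M (Xset G ℓ j) (Xset G ℓ i) z c),
          T G ℓ M Q a ω j z
            (K - if c ⟨ℓ i, Set.mem_union_right _ rfl⟩ ∈ Q then 1 else 0)
            (W - if c ⟨ℓ i, Set.mem_union_right _ rfl⟩ ∈ Q then (ω (ℓ i) : ℤ) else 0) := by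
  classical
  have hsi : ℓ.symm (ℓ i) = i := ℓ.symm_apply_apply i
  have hsj : ℓ.symm (ℓ j) = j := ℓ.symm_apply_apply j
  have hVjVi : Vset ℓ j ⊆ Vset ℓ i := by
    intro v hv
    simp only [Vset, Set.mem_setOf_eq, Fin.le_def] at *
    omega
  have hviVi : ℓ i ∈ Vset ℓ i := by
    simp only [Vset, Set.mem_setOf_eq, hsi, le_refl]
  have hviVj : ℓ i ∉ Vset ℓ j := by
    simp only [Vset, Set.mem_setOf_eq, hsi, Fin.le_def]
    omega
  have hlast : ∀ x ∈ Vset ℓ i, x ∉ Vset ℓ j → x = ℓ i := by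
    intro v hv hv'
    simp only [Vset, Set.mem_setOf_eq, Fin.le_def] at hv hv'
    have h2 : ℓ.symm v = i := Fin.ext (by omega)
    calc v = ℓ (ℓ.symm v) := (ℓ.apply_symm_apply v).symm
    _ = ℓ i := by rw [h2]
  have hXjVj : Xset G ℓ j ⊆ Vset ℓ j := by
    intro v hv
    simp only [Xset, Set.mem_union, Set.mem_setOf_eq, Set.mem_singleton_iff] at hv
    rcases hv with ⟨h1, -⟩ | h
    · exact h1
    · subst h
      simp only [Vset, Set.mem_setOf_eq, hsj, le_refl]
  have hXiVi : Xset G ℓ i ⊆ Vset ℓ i := by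
    intro v hv
    simp only [Xset, Set.mem_union, Set.mem_setOf_eq, Set.mem_singleton_iff] at hv
    rcases hv with ⟨h1, -⟩ | h
    · exact h1
    · subst h
      simp only [Vset, Set.mem_setOf_eq, hsi, le_refl]
  have hXjVi : ∀ v ∈ Xset G ℓ j, v ∈ Vset ℓ i := fun v hv => hVjVi (hXjVj hv)
  have hXisub : ∀ v ∈ Xset G ℓ i, v ≠ ℓ i → v ∈ Xset G ℓ j := by
    intro v hv hne
    simp only [Xset, Set.mem_union, Set.mem_setOf_eq, Set.mem_singleton_iff] at hv ⊢
    rcases hv with ⟨h1, w, hadj, hw⟩ | h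
    · left
      have hvne : ℓ.symm v ≠ i := by
        intro hh
        exact hne (by rw [← hh, ℓ.apply_symm_apply])
      have hvne' : (ℓ.symm v : ℕ) ≠ (i : ℕ) := fun hh => hvne (Fin.ext hh)
      rw [Fin.le_def] at h1
      rw [Fin.lt_def] at hw
      exact ⟨by rw [Fin.le_def]; omega, w, hadj, by rw [Fin.lt_def]; omega⟩
    · exact absurd h hne
  have hviXi : ℓ i ∈ Xset G ℓ i := Set.mem_union_right _ rfl
  have hviXj : ℓ i ∉ Xset G ℓ j := by
    intro hv
    simp only [Xset, Set.mem_union, Set.mem_setOf_eq, Set.mem_singleton_iff] at hv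
    rcases hv with ⟨h1, -⟩ | h
    · rw [hsi, Fin.le_def] at h1; omega
    · have := congrArg Fin.val (ℓ.injective h)
      omega
  have hAdjXj : ∀ u ∈ Vset ℓ j, G.Adj u (ℓ i) → u ∈ Xset G ℓ j := by
    intro u hu hadj
    exact Set.mem_union_left _ ⟨hu, ℓ i, hadj, by rw [hsi, Fin.lt_def]; omega⟩
  by_cases hca : c ⟨ℓ i, Set.mem_union_right _ rfl⟩ ∈ a (ℓ i)
  swap
  · rw [if_neg hca, zero_mul, T_eq, Finset.card_eq_zero,
      Finset.eq_empty_iff_forall_notMem]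
    intro φ hφ
    rw [Finset.mem_filter] at hφ
    obtain ⟨-, hA, -, -, ha, -⟩ := hφ
    have e1 : φ ⟨ℓ i, hviVi⟩ = c ⟨ℓ i, Set.mem_union_right _ rfl⟩ :=
      hA (ℓ i) hviXi hviVi
    have h4 : φ ⟨ℓ i, hviVi⟩ ∈ a (ℓ i) := ha ⟨ℓ i, hviVi⟩
    rw [e1] at h4
    exact hca h4
  · rw [if_pos hca, one_mul, T_eq]
    have Hmap : ∀ φ ∈ Finset.univ.filter (Pred G ℓ M Q a ω i c K W),
        (fun x : ↥(Xset G ℓ j) => φ ⟨x.1, hXjVi x.1 x.2⟩) ∈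
          Finset.univ.filter
            (fun z : ↥(Xset G ℓ j) → C => Compat G M (Xset G ℓ j) (Xset G ℓ i) z c) := by
      intro φ hφ
      rw [Finset.mem_filter] at hφ ⊢
      obtain ⟨-, hA, -, -, -, hMc⟩ := hφ
      refine ⟨Finset.mem_univ _, ?_, ?_⟩
      · intro v hx hy
        exact hA v hy (hXjVi v hx)
      · intro u v hu hv hvX hadj
        have h1 : φ ⟨v, hXiVi hv⟩ = c ⟨v, hv⟩ := hA v hv (hXiVi hv)
        rw [← h1]
        exact hMc ⟨u, hXjVi u hu⟩ ⟨v, hXiVi hv⟩ hadj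
    refine (Finset.card_eq_sum_card_fiberwise Hmap).trans ?_
    refine Finset.sum_congr rfl ?_
    intro z hz
    rw [Finset.mem_filter] at hz
    obtain ⟨-, hzA, hzM⟩ := hz
    rw [T_eq]
    -- backward construction
    have Hback : ∀ ψ : ↥(Vset ℓ j) → C,
        Pred G ℓ M Q a ω j z
          (K - if c ⟨ℓ i, Set.mem_union_right _ rfl⟩ ∈ Q then 1 else 0)
          (W - if c ⟨ℓ i, Set.mem_union_right _ rfl⟩ ∈ Q then (ω (ℓ i) : ℤ) else 0) ψ →
        (Pred G ℓ M Q a ω i c K W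
            (fun x : ↥(Vset ℓ i) =>
              if h : x.1 ∈ Vset ℓ j then ψ ⟨x.1, h⟩
              else c ⟨ℓ i, Set.mem_union_right _ rfl⟩) ∧
          (fun x : ↥(Xset G ℓ j) =>
              (fun x : ↥(Vset ℓ i) =>
                if h : x.1 ∈ Vset ℓ j then ψ ⟨x.1, h⟩
                else c ⟨ℓ i, Set.mem_union_right _ rfl⟩) ⟨x.1, hXjVi x.1 x.2⟩) = z) := by
      intro ψ hψ
      obtain ⟨hAψ, hKψ, hWψ, haψ, hMψ⟩ := hψ
      set φ' : ↥(Vset ℓ i) → C := fun x =>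
        if h : x.1 ∈ Vset ℓ j then ψ ⟨x.1, h⟩
        else c ⟨ℓ i, Set.mem_union_right _ rfl⟩ with hφ'def
      have hφvi : φ' ⟨ℓ i, hviVi⟩ = c ⟨ℓ i, Set.mem_union_right _ rfl⟩ := dif_neg hviVj
      have hφVj : ∀ x : ↥(Vset ℓ j), φ' ⟨x.1, hVjVi x.2⟩ = ψ x := fun x => dif_pos x.2
      constructor
      · refine ⟨?_, ?_, ?_, ?_, ?_⟩
        · -- agreement
          intro v hv hv'
          by_cases hvj : v ∈ Vset ℓ j
          · have hXj : v ∈ Xset G ℓ j := hXisub v hv (fun he => hviVj (he ▸ hvj))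
            have e1 : φ' ⟨v, hv'⟩ = ψ ⟨v, hvj⟩ := dif_pos hvj
            rw [e1, hAψ v hXj (hXjVj hXj)]
            exact hzA v hXj hv
          · have he : v = ℓ i := hlast v hv' hvj
            subst he
            exact dif_neg hvj
        · -- K
          rw [card_Q_eq]
          have hsplitK : (∑ x : ↥(Vset ℓ i), if φ' x ∈ Q then (1:ℤ) else 0)
              = (∑ x : ↥(Vset ℓ j), if φ' ⟨x.1, hVjVi x.2⟩ ∈ Q then (1:ℤ) else 0)
                + (if φ' ⟨ℓ i, hviVi⟩ ∈ Q then (1:ℤ) else 0) :=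
            sum_split hVjVi hviVi hviVj hlast _
          rw [hsplitK, hφvi]
          simp only [hφVj]
          rw [card_Q_eq] at hKψ
          rw [hKψ]
          ring
        · -- W
          have hsplitW : (∑ x : ↥(Vset ℓ i), if φ' x ∈ Q then (ω x.1 : ℤ) else 0)
              = (∑ x : ↥(Vset ℓ j), if φ' ⟨x.1, hVjVi x.2⟩ ∈ Q then (ω x.1 : ℤ) else 0)
                + (if φ' ⟨ℓ i, hviVi⟩ ∈ Q then (ω (ℓ i) : ℤ) else 0) :=
            sum_split hVjVi hviVi hviVj hlast _
          rw [hsplitW, hφvi]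
          simp only [hφVj]
          rw [hWψ]
          ring
        · -- allowed colors
          intro x
          by_cases h : x.1 ∈ Vset ℓ j
          · have e1 : φ' x = ψ ⟨x.1, h⟩ := dif_pos h
            rw [e1]
            exact haψ ⟨x.1, h⟩
          · have e1 : φ' x = c ⟨ℓ i, Set.mem_union_right _ rfl⟩ := dif_neg h
            have hx1 : x.1 = ℓ i := hlast x.1 x.2 h
            rw [e1, hx1]
            exact hca
        · -- edges
          intro x y hadj
          by_cases hx : x.1 ∈ Vset ℓ j <;> by_cases hy : y.1 ∈ Vset ℓ j
          · rw [show φ' x = ψ ⟨x.1, hx⟩ from dif_pos hx,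
              show φ' y = ψ ⟨y.1, hy⟩ from dif_pos hy]
            exact hMψ ⟨x.1, hx⟩ ⟨y.1, hy⟩ hadj
          · have hy1 : y.1 = ℓ i := hlast y.1 y.2 hy
            have hadj' : G.Adj x.1 (ℓ i) := hy1 ▸ hadj
            have hxXj : x.1 ∈ Xset G ℓ j := hAdjXj x.1 hx hadj'
            rw [show φ' x = ψ ⟨x.1, hx⟩ from dif_pos hx,
              show φ' y = c ⟨ℓ i, Set.mem_union_right _ rfl⟩ from by
                rw [hφ'def]; exact dif_neg hy]
            rw [hAψ x.1 hxXj hx]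
            exact hzM x.1 (ℓ i) hxXj hviXi hviXj hadj'
          · have hx1 : x.1 = ℓ i := hlast x.1 x.2 hx
            have hadj' : G.Adj y.1 (ℓ i) := by
              rw [← hx1]; exact hadj.symm
            have hyXj : y.1 ∈ Xset G ℓ j := hAdjXj y.1 hy hadj'
            rw [show φ' y = ψ ⟨y.1, hy⟩ from dif_pos hy,
              show φ' x = c ⟨ℓ i, Set.mem_union_right _ rfl⟩ from by
                rw [hφ'def]; exact dif_neg hx]
            apply hM
            rw [hAψ y.1 hyXj hy]
            exact hzM y.1 (ℓ i) hyXj hviXi hviXj hadj'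
          · have hx1 : x.1 = ℓ i := hlast x.1 x.2 hx
            have hy1 : y.1 = ℓ i := hlast y.1 y.2 hy
            exact absurd (hx1.trans hy1.symm) hadj.ne
      · -- fiber condition
        funext x
        have e1 : φ' ⟨x.1, hXjVi x.1 x.2⟩ = ψ ⟨x.1, hXjVj x.2⟩ := dif_pos (hXjVj x.2)
        rw [e1, hAψ x.1 x.2 (hXjVj x.2)]
    -- forward construction
    have Hfwd : ∀ φ : ↥(Vset ℓ i) → C, Pred G ℓ M Q a ω i c K W φ →
        (fun x : ↥(Xset G ℓ j) => φ ⟨x.1, hXjVi x.1 x.2⟩) = z →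
        Pred G ℓ M Q a ω j z
          (K - if c ⟨ℓ i, Set.mem_union_right _ rfl⟩ ∈ Q then 1 else 0)
          (W - if c ⟨ℓ i, Set.mem_union_right _ rfl⟩ ∈ Q then (ω (ℓ i) : ℤ) else 0)
          (fun x : ↥(Vset ℓ j) => φ ⟨x.1, hVjVi x.2⟩) := by
      intro φ hφ hfib
      obtain ⟨hA, hK, hW, ha, hMc⟩ := hφ
      have e1 : φ ⟨ℓ i, hviVi⟩ = c ⟨ℓ i, Set.mem_union_right _ rfl⟩ :=
        hA (ℓ i) hviXi hviVi
      refine ⟨?_, ?_, ?_, ?_, ?_⟩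
      · intro v hv hv'
        exact congrFun hfib ⟨v, hv⟩
      · rw [card_Q_eq]
        rw [card_Q_eq] at hK
        have hsplitK : (∑ x : ↥(Vset ℓ i), if φ x ∈ Q then (1:ℤ) else 0)
            = (∑ x : ↥(Vset ℓ j), if φ ⟨x.1, hVjVi x.2⟩ ∈ Q then (1:ℤ) else 0)
              + (if φ ⟨ℓ i, hviVi⟩ ∈ Q then (1:ℤ) else 0) :=
          sum_split hVjVi hviVi hviVj hlast _
        rw [hsplitK, e1] at hK
        linarith
      · have hsplitW : (∑ x : ↥(Vset ℓ i), if φ x ∈ Q then (ω x.1 : ℤ) else 0)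
            = (∑ x : ↥(Vset ℓ j), if φ ⟨x.1, hVjVi x.2⟩ ∈ Q then (ω x.1 : ℤ) else 0)
              + (if φ ⟨ℓ i, hviVi⟩ ∈ Q then (ω (ℓ i) : ℤ) else 0) :=
          sum_split hVjVi hviVi hviVj hlast _
        rw [hsplitW, e1] at hW
        linarith
      · intro x
        exact ha ⟨x.1, hVjVi x.2⟩
      · intro x y hadj
        exact hMc ⟨x.1, hVjVi x.2⟩ ⟨y.1, hVjVi y.2⟩ hadj
    refine Finset.card_bij'
      (fun (φ : ↥(Vset ℓ i) → C) _ => fun x : ↥(Vset ℓ j) => φ ⟨x.1, hVjVi x.2⟩)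
      (fun (ψ : ↥(Vset ℓ j) → C) _ => fun x : ↥(Vset ℓ i) =>
        if h : x.1 ∈ Vset ℓ j then ψ ⟨x.1, h⟩
        else c ⟨ℓ i, Set.mem_union_right _ rfl⟩)
      ?_ ?_ ?_ ?_
    · -- hi
      intro φ hφ
      rw [Finset.mem_filter] at hφ
      obtain ⟨hφ1, hfib⟩ := hφ
      rw [Finset.mem_filter] at hφ1
      rw [Finset.mem_filter]
      exact ⟨Finset.mem_univ _, Hfwd φ hφ1.2 hfib⟩
    · -- hj
      intro ψ hψ
      rw [Finset.mem_filter] at hψ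
      obtain ⟨hb1, hb2⟩ := Hback ψ hψ.2
      rw [Finset.mem_filter, Finset.mem_filter]
      exact ⟨⟨Finset.mem_univ _, hb1⟩, hb2⟩
    · -- left_inv
      intro φ hφ
      rw [Finset.mem_filter, Finset.mem_filter] at hφ
      obtain ⟨⟨-, hP⟩, -⟩ := hφ
      obtain ⟨hA, -, -, -, -⟩ := hP
      funext x
      show (if h : x.1 ∈ Vset ℓ j then φ ⟨x.1, hVjVi h⟩
        else c ⟨ℓ i, Set.mem_union_right _ rfl⟩) = φ x
      by_cases h : x.1 ∈ Vset ℓ j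
      · exact dif_pos h
      · rw [dif_neg h]
        have e1 : x = ⟨ℓ i, hviVi⟩ := Subtype.ext (hlast x.1 x.2 h)
        rw [e1]
        exact (hA (ℓ i) hviXi hviVi).symm
    · -- right_inv
      intro ψ hψ
      funext x
      exact dif_pos x.2


/-- The dynamic-programming recurrence:
`T_i[c,K,W] = [c(v_i) ∈ a(v_i)] · Σ_{z ∼ c} T_{i-1}[z, K - [c(v_i) ∈ Q], W - ω(v_i)[c(v_i) ∈ Q]]`. -/
theorem stmt_15 {V C : Type} [Fintype V] [DecidableEq V] [Fintype C] [DecidableEq C]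
    (G : SimpleGraph V) {n : ℕ} (ℓ : Fin n ≃ V)
    (M : C → C → Prop) (hM : Symmetric M) (Q : Finset C) (a : V → Finset C) (ω : V → ℕ)
    (i j : Fin n) (hij : (i : ℕ) = (j : ℕ) + 1)
    (c : ↥(Xset G ℓ i) → C) (K W : ℤ) :
    T G ℓ M Q a ω i c K W =
      (if c ⟨ℓ i, Set.mem_union_right _ rfl⟩ ∈ a (ℓ i) then 1 else 0) *
        ∑ z ∈ Finset.univ.filter
            (fun z : ↥(Xset G ℓ j) → C => Compat G M (Xset G ℓ j) (Xset G ℓ i) z c),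
          T G ℓ M Q a ω j z
            (K - if c ⟨ℓ i, Set.mem_union_right _ rfl⟩ ∈ Q then 1 else 0)
            (W - if c ⟨ℓ i, Set.mem_union_right _ rfl⟩ ∈ Q then (ω (ℓ i) : ℤ) else 0) := by
  have h := stmt_aux_s15 G ℓ M hM Q a ω i j hij c K W
  convert h using 1
  congr!
end

section
/- Let p be a prime, C a finite set of colors, M a symmetric 0-1 matrix indexed by C with rank k over F_p, whose first k rows form a row basis. Fix disjoint X, Y ⊆ V, a table f: C^X → F_p, and a vertex v ∈ X having exactly one neighbor w in Y. Define f̂(x) = 0 if x(v) > k, and f̂(x) = f(x) + Σ_{b=k+1}^{|C|} d_{b,x(v)} · f(x[v ↦ b]) otherwise, where m_b = Σ_{j=1}^k d_{b,j} m_j expresses row b in the basis. Then for every y ∈ C^Y: Σ_{x ∼ y} f̂(x) = Σ_{x ∼ y} f(x) in F_p, where x ∼ y means M[x(u), y(u')] = 1 for every edge {u,u'} with u ∈ X, u' ∈ Y. -/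
open scoped Classical

private lemma aux_sum {p q k : ℕ} [Fact p.Prime] (M : Matrix (Fin q) (Fin q) (ZMod p))
    (h01 : ∀ i j, M i j = 0 ∨ M i j = 1)
    (d : Fin q → Fin q → ZMod p)
    (hd : ∀ b : Fin q, k ≤ (b : ℕ) → ∀ jc : Fin q,
      M b jc = ∑ jj : Fin q, (if (jj : ℕ) < k then d b jj * M jj jc else 0))
    (c : Fin q) (g : Fin q → ZMod p) :
    (∑ a : Fin q, if M a c = 1 then
        (if k ≤ (a : ℕ) then 0 else g a + ∑ b : Fin q, if k ≤ (b : ℕ) then d b a * g b else 0)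
      else 0)
    = ∑ a : Fin q, if M a c = 1 then g a else 0 := by
  have hind : ∀ (a : Fin q) (t : ZMod p), (if M a c = 1 then t else 0) = M a c * t := by
    intro a t
    rcases h01 a c with h | h <;> simp [h]
  simp only [hind]
  have key : ∀ b : Fin q, k ≤ (b : ℕ) →
      (∑ a : Fin q, if k ≤ (a : ℕ) then 0 else d b a * M a c) = M b c := by
    intro b hb
    rw [hd b hb c]
    apply Finset.sum_congr rfl
    intro a _
    by_cases h : (a : ℕ) < k
    · simp [h, Nat.not_le.mpr h]
    · simp [h, Nat.le_of_not_lt h]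
  have step : ∀ a : Fin q,
      M a c * (if k ≤ (a : ℕ) then 0 else g a + ∑ b : Fin q,
        if k ≤ (b : ℕ) then d b a * g b else 0)
      = (if k ≤ (a : ℕ) then 0 else M a c * g a)
        + ∑ b : Fin q, (if k ≤ (b : ℕ) then
            (if k ≤ (a : ℕ) then 0 else d b a * M a c) * g b else 0) := by
    intro a
    by_cases h : k ≤ (a : ℕ)
    · simp [h]
    · simp only [h, if_false, if_neg, mul_add, Finset.mul_sum, mul_ite, mul_zero]
      ring_nf
  simp only [step]
  rw [Finset.sum_add_distrib, Finset.sum_comm]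
  have second : (∑ b : Fin q, ∑ a : Fin q, (if k ≤ (b : ℕ) then
      (if k ≤ (a : ℕ) then 0 else d b a * M a c) * g b else 0))
      = ∑ b : Fin q, if k ≤ (b : ℕ) then M b c * g b else 0 := by
    apply Finset.sum_congr rfl
    intro b _
    by_cases hb : k ≤ (b : ℕ)
    · simp only [hb, if_true]
      rw [← Finset.sum_mul, key b hb]
    · simp [hb]
  rw [second, ← Finset.sum_add_distrib]
  apply Finset.sum_congr rfl
  intro a _
  split_ifs <;> ring

/-- The "Reduce" identity: let `M` be a symmetric 0-1 consistency matrix over `F_p` of rank `k`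
whose first `k` rows form a row basis (witnessed by coefficients `d`), let `X, Y` be disjoint
vertex sets, `f` a table on colorings of `X`, and `v ∈ X` a vertex with exactly one neighbor
`w ∈ Y`.  Replacing `f` by the reduced table `f̂` (zero on colorings giving `v` a reduced color,
and otherwise adding the basis-expansion correction terms) does not change the compatible sums:
for every coloring `y` of `Y`, `Σ_{x ∼ y} f̂(x) = Σ_{x ∼ y} f(x)` in `F_p`. -/
theorem stmt_17 (p : ℕ) [Fact p.Prime] {V : Type} [Fintype V] [DecidableEq V]
    (G : SimpleGraph V) (q k : ℕ) (M : Matrix (Fin q) (Fin q) (ZMod p))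
    (hsym : M.IsSymm) (h01 : ∀ i j, M i j = 0 ∨ M i j = 1) (hrank : M.rank = k)
    (d : Fin q → Fin q → ZMod p)
    (hd : ∀ b : Fin q, k ≤ (b : ℕ) → ∀ jc : Fin q,
      M b jc = ∑ jj : Fin q, (if (jj : ℕ) < k then d b jj * M jj jc else 0))
    (X Y : Set V) (hXY : Disjoint X Y)
    (f : (↥X → Fin q) → ZMod p)
    (v : V) (hv : v ∈ X) (w : V) (hw : w ∈ Y) (hadj : G.Adj v w)
    (huniq : ∀ u ∈ Y, G.Adj v u → u = w) :
    ∀ y : ↥Y → Fin q,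
      (∑ x : ↥X → Fin q,
        if (∀ (u u' : V) (hu : u ∈ X) (hu' : u' ∈ Y),
              G.Adj u u' → M (x ⟨u, hu⟩) (y ⟨u', hu'⟩) = 1) then
          (if k ≤ ((x ⟨v, hv⟩ : Fin q) : ℕ) then 0
           else f x + ∑ b : Fin q,
             if k ≤ (b : ℕ) then d b (x ⟨v, hv⟩) * f (Function.update x ⟨v, hv⟩ b) else 0)
        else 0) =
      (∑ x : ↥X → Fin q,
        if (∀ (u u' : V) (hu : u ∈ X) (hu' : u' ∈ Y),
              G.Adj u u' → M (x ⟨u, hu⟩) (y ⟨u', hu'⟩) = 1) then f x else 0) := by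
  intro y
  set vv : ↥X := ⟨v, hv⟩ with hvv
  set c : Fin q := y ⟨w, hw⟩ with hc
  set e := Equiv.funSplitAt vv (Fin q) with he
  -- facts about e.symm
  have hxv : ∀ (a : Fin q) (z : {u : ↥X // u ≠ vv} → Fin q), e.symm (a, z) vv = a := by
    intro a z
    have := e.apply_symm_apply (a, z)
    exact congrArg Prod.fst this
  have hxz : ∀ (a : Fin q) (z : {u : ↥X // u ≠ vv} → Fin q) (u : ↥X) (h : u ≠ vv),
      e.symm (a, z) u = z ⟨u, h⟩ := by
    intro a z u h
    have := e.apply_symm_apply (a, z)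
    have h2 := congrArg Prod.snd this
    exact congrFun h2 ⟨u, h⟩
  have hupd : ∀ (a b : Fin q) (z : {u : ↥X // u ≠ vv} → Fin q),
      Function.update (e.symm (a, z)) vv b = e.symm (b, z) := by
    intro a b z
    funext u
    by_cases h : u = vv
    · subst h; rw [Function.update_self, hxv]
    · rw [Function.update_of_ne h, hxz a z u h, hxz b z u h]
  -- the reduced compatibility predicate
  set Q : ({u : ↥X // u ≠ vv} → Fin q) → Prop :=
    fun z => ∀ (u u' : V) (hu : u ∈ X) (hu' : u' ∈ Y) (h : (⟨u, hu⟩ : ↥X) ≠ vv),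
      G.Adj u u' → M (z ⟨⟨u, hu⟩, h⟩) (y ⟨u', hu'⟩) = 1 with hQdef
  have hPiff : ∀ (a : Fin q) (z : {u : ↥X // u ≠ vv} → Fin q),
      (∀ (u u' : V) (hu : u ∈ X) (hu' : u' ∈ Y),
        G.Adj u u' → M (e.symm (a, z) ⟨u, hu⟩) (y ⟨u', hu'⟩) = 1)
      ↔ (M a c = 1 ∧ Q z) := by
    intro a z
    constructor
    · intro h
      constructor
      · have := h v w hv hw hadj
        rwa [show (⟨v, hv⟩ : ↥X) = vv from rfl, hxv] at this
      · intro u u' hu hu' hne hadj'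
        have := h u u' hu hu' hadj'
        rwa [hxz a z ⟨u, hu⟩ hne] at this
    · rintro ⟨hM, hQ⟩ u u' hu hu' hadj'
      by_cases hne : (⟨u, hu⟩ : ↥X) = vv
      · have huv : u = v := congrArg Subtype.val hne
        subst huv
        have huw : u' = w := huniq u' hu' hadj'
        have : (⟨u', hu'⟩ : ↥Y) = ⟨w, hw⟩ := Subtype.ext huw
        rw [hne, hxv, this, ← hc]
        exact hM
      · rw [hxz a z ⟨u, hu⟩ hne]
        exact hQ u u' hu hu' hne hadj'
  -- reindex both sums
  have reindex : ∀ F : (↥X → Fin q) → ZMod p,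
      (∑ x : ↥X → Fin q, F x)
      = ∑ z : {u : ↥X // u ≠ vv} → Fin q, ∑ a : Fin q, F (e.symm (a, z)) := by
    intro F
    rw [← e.symm.sum_comp F, Fintype.sum_prod_type, Finset.sum_comm]
  rw [reindex, reindex]
  apply Finset.sum_congr rfl
  intro z _
  by_cases hQ : Q z
  · have h1 : ∀ a : Fin q,
        (∀ (u u' : V) (hu : u ∈ X) (hu' : u' ∈ Y),
          G.Adj u u' → M (e.symm (a, z) ⟨u, hu⟩) (y ⟨u', hu'⟩) = 1) ↔ M a c = 1 := by
      intro a
      rw [hPiff a z]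
      exact and_iff_left hQ
    simp only [hxv, hupd]
    calc (∑ a : Fin q,
          if (∀ (u u' : V) (hu : u ∈ X) (hu' : u' ∈ Y),
              G.Adj u u' → M (e.symm (a, z) ⟨u, hu⟩) (y ⟨u', hu'⟩) = 1) then
            (if k ≤ (a : ℕ) then 0
             else f (e.symm (a, z)) + ∑ b : Fin q,
               if k ≤ (b : ℕ) then d b a * f (e.symm (b, z)) else 0)
          else 0)
        = ∑ a : Fin q, if M a c = 1 then
            (if k ≤ (a : ℕ) then 0
             else f (e.symm (a, z)) + ∑ b : Fin q,
               if k ≤ (b : ℕ) then d b a * f (e.symm (b, z)) else 0)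
          else 0 := by
          apply Finset.sum_congr rfl
          intro a _
          rw [if_congr (h1 a) rfl rfl]
      _ = ∑ a : Fin q, if M a c = 1 then f (e.symm (a, z)) else 0 :=
          aux_sum M h01 d hd c (fun a => f (e.symm (a, z)))
      _ = _ := by
          apply Finset.sum_congr rfl
          intro a _
          rw [if_congr (h1 a).symm rfl rfl]
  · have h0 : ∀ a : Fin q,
        ¬(∀ (u u' : V) (hu : u ∈ X) (hu' : u' ∈ Y),
          G.Adj u u' → M (e.symm (a, z) ⟨u, hu⟩) (y ⟨u', hu'⟩) = 1) := by
      intro a h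
      exact hQ (((hPiff a z).mp h).2)
    simp only [if_neg (h0 _), Finset.sum_const_zero]
end
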